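/- arXiv:2405.04954 — 8 statements merged into one kernel-verified Lean document; each statement's English description precedes it below -/
import Mathlib

section
/- For all natural numbers n ≥ 1 and k ≥ 1, and real (or commutative ring) variables x_1,...,x_k, the multivariate Abel identity holds: (x_1 + ... + x_k) · (n + x_1 + ... + x_k)^{n-1} = Σ_{i_1 + ... + i_k = n} (n choose i_1,...,i_k) · Π_{j=1}^{k} x_j · (x_j + i_j)^{i_j - 1}, where the sum is over all tuples of nonnegative integers (i_1,...,i_k) summing to n. -/
/-!
The Abel polynomials `A n x = x * (x + n) ^ (n - 1)` form a sequence of binomial type: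
`A n (x + y) = ∑ i + j = n, (n choose i) * A i x * A j y`. Indeed `A (n + 1)` has derivative
`(n + 1) * A n (x + 1)`, so by induction on `n` both sides have the same derivative in `x`, and they
agree at `x = 0` because `A i 0 = 0` for `i ≥ 1`. Every sequence of binomial type satisfies the
corresponding multinomial identity, by induction on the number of variables, just as the
multinomial theorem follows from the binomial one.
-/

open Finset

structure IsBinomialType {R : Type*} [CommSemiring R] (p : ℕ → R → R) : Prop where
  apply_zero : ∀ n, p n 0 = if n = 0 then 1 else 0
  apply_add : ∀ n x y,
    p n (x + y) = ∑ ij ∈ antidiagonal n, n.choose ij.1 * p ij.1 x * p ij.2 y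

namespace IsBinomialType

variable {ι R : Type*} [DecidableEq ι] [CommSemiring R] {p : ℕ → R → R}

theorem apply_sum (hp : IsBinomialType p) (s : Finset ι) (x : ι → R) (n : ℕ) :
    p n (∑ j ∈ s, x j) =
      ∑ m ∈ s.piAntidiag n, Nat.multinomial s m * ∏ j ∈ s, p (m j) (x j) := by
  induction s using cons_induction generalizing n with
  | empty => rw [sum_empty, hp.apply_zero, piAntidiag_empty]; split_ifs <;> simp
  | cons a s has ih =>
    rw [sum_cons, hp.apply_add, piAntidiag_cons has, sum_disjiUnion]
    refine sum_congr rfl fun ij hij => ?_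
    rw [sum_map, ih, mul_sum]
    refine sum_congr rfl fun m hm => ?_
    rw [mem_piAntidiag] at hm
    rw [addRightEmbedding_apply]
    set m' := m + fun t => if t = a then ij.1 else 0
    have hm'a : m' a = ij.1 := by simp [m', not_imp_comm.1 (hm.2 a) has]
    have hm's : ∀ j ∈ s, m' j = m j := fun j hj => by simp [m', ne_of_mem_of_not_mem hj has]
    rw [Nat.multinomial_cons, prod_cons, hm'a, sum_congr rfl hm's, hm.1, mem_antidiagonal.1 hij,
      Nat.multinomial_congr hm's, prod_congr rfl fun j hj => congrArg (p · (x j)) (hm's j hj)]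
    push_cast
    ring

end IsBinomialType

section AbelPoly

variable {R : Type*} [CommSemiring R]

def abelPoly : ℕ → R → R
  | 0, _ => 1
  | n + 1, x => x * (x + (n + 1 : ℕ)) ^ n

@[simp] theorem abelPoly_zero (x : R) : abelPoly 0 x = 1 := rfl

theorem abelPoly_eq_ite (n : ℕ) (x : R) :
    abelPoly n x = if n = 0 then 1 else x * (x + n) ^ (n - 1) := by
  cases n <;> simp [abelPoly]

theorem abelPoly_apply_zero (n : ℕ) : abelPoly n (0 : R) = if n = 0 then 1 else 0 := by
  cases n <;> simp [abelPoly]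

end AbelPoly

section AbelPolyDeriv

variable {𝕜 : Type*} [RCLike 𝕜]

theorem hasDerivAt_abelPoly_succ (n : ℕ) (x : 𝕜) :
    HasDerivAt (abelPoly (n + 1)) ((n + 1) * abelPoly n (x + 1)) x := by
  have h := (hasDerivAt_id x).mul (((hasDerivAt_id x).add_const ((n + 1 : ℕ) : 𝕜)).pow n)
  refine h.congr_deriv ?_
  cases n with
  | zero => simp [abelPoly]
  | succ m =>
    simp only [abelPoly, id_eq, Nat.cast_add, Nat.cast_one, Pi.pow_apply, pow_succ, one_mul,
      add_tsub_cancel_right, mul_one]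
    ring

theorem abelPoly_add (n : ℕ) (x y : 𝕜) :
    abelPoly n (x + y) =
      ∑ ij ∈ antidiagonal n, n.choose ij.1 * abelPoly ij.1 x * abelPoly ij.2 y := by
  induction n generalizing x y with
  | zero => simp
  | succ n ih =>
    rw [Nat.sum_antidiagonal_succ]
    set G : 𝕜 → 𝕜 := fun x => ∑ ij ∈ antidiagonal n,
      ((n + 1).choose (ij.1 + 1) : 𝕜) * abelPoly (ij.1 + 1) x * abelPoly ij.2 y
    have hF : ∀ x, HasDerivAt (fun x => abelPoly (n + 1) (x + y))
        ((n + 1) * abelPoly n (x + y + 1)) x :=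
      fun x => by simpa using (hasDerivAt_abelPoly_succ n (x + y)).comp_add_const x y
    have hG : ∀ x, HasDerivAt G ((n + 1) * abelPoly n (x + y + 1)) x := fun x => by
      have h := HasDerivAt.fun_sum (u := antidiagonal n) fun ij _ =>
        ((hasDerivAt_abelPoly_succ ij.1 x).const_mul ((n + 1).choose (ij.1 + 1) : 𝕜)).mul_const
          (abelPoly ij.2 y)
      refine h.congr_deriv ?_
      rw [add_right_comm, ih, mul_sum]
      refine sum_congr rfl fun ij _ => ?_
      have hchoose : ((n + 1 : ℕ) : 𝕜) * n.choose ij.1 =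
          (n + 1).choose (ij.1 + 1) * (ij.1 + 1 : ℕ) :=
        mod_cast Nat.add_one_mul_choose_eq n ij.1
      push_cast at hchoose
      linear_combination -(abelPoly ij.1 (x + 1) * abelPoly ij.2 y) * hchoose
    have hconst := is_const_of_deriv_eq_zero (f := fun x => abelPoly (n + 1) (x + y) - G x)
      (fun x => ((hF x).sub (hG x)).differentiableAt)
      (fun x => by simpa using ((hF x).fun_sub (hG x)).deriv) x 0
    have hG0 : G 0 = 0 := sum_eq_zero fun ij _ => by simp [abelPoly_apply_zero]
    simp only [hG0, zero_add, sub_zero] at hconst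
    simp only [Nat.choose_zero_right, Nat.cast_one, one_mul, abelPoly_zero]
    linear_combination hconst

theorem isBinomialType_abelPoly : IsBinomialType (abelPoly : ℕ → 𝕜 → 𝕜) :=
  ⟨abelPoly_apply_zero, abelPoly_add⟩

end AbelPolyDeriv

theorem abel_multivariate_general (n k : ℕ) (hn : 1 ≤ n) (x : Fin k → ℝ) :
    (∑ j, x j) * ((n : ℝ) + ∑ j, x j) ^ (n - 1) =
      ∑ m ∈ Finset.Nat.antidiagonalTuple k n,
        (Nat.multinomial Finset.univ m : ℝ) *
          ∏ j, (if m j = 0 then 1 else x j * (x j + (m j : ℝ)) ^ (m j - 1)) := by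
  have h := isBinomialType_abelPoly.apply_sum univ x n
  rw [piAntidiag_univ_fin_eq_antidiagonalTuple, abelPoly_eq_ite, if_neg (by omega)] at h
  simpa only [abelPoly_eq_ite, add_comm (∑ j, x j)] using h

theorem abel_multivariate (n k : ℕ) (hn : 1 ≤ n) (hk : 1 ≤ k) (x : Fin k → ℝ) :
    (∑ j, x j) * ((n : ℝ) + ∑ j, x j) ^ (n - 1) =
      ∑ m ∈ Finset.Nat.antidiagonalTuple k n,
        (Nat.multinomial Finset.univ m : ℝ) *
          ∏ j, (if m j = 0 then 1 else x j * (x j + (m j : ℝ)) ^ (m j - 1)) :=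
  abel_multivariate_general n k hn x
end

section
/- The number of labeled rooted forests on [n] = {1,...,n} consisting of exactly k rooted trees (equivalently, labeled planted forests of k trees on n vertices) equals C(n-1, k-1) · n^{n-k}. -/
/-! Grafting the tree of a root `u` onto a vertex `v` outside that tree is a
bijection from triples (forest with `k + 1` trees, `u`, `v`) to pairs (forest with `k` trees,
edge `u → v`). A forest with `k + 1` trees on `n` vertices admits `(k + 1) n - n = k n`
graftings, since every vertex lies in exactly one tree, and a forest with `k` trees has `n - k`
edges. Hence `(n - k) F(k) = k n F(k + 1)`, and `F(n) = 1` gives the formula by downward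
induction on `k`. -/

open Finset

/-- A rooted forest on `[n]` encoded by its parent function: `f v = none` iff `v` is a root.
Acyclicity is expressed by the existence of a height function decreasing along parent edges. -/
def IsRootedForest {n : ℕ} (f : Fin n → Option (Fin n)) : Prop :=
  ∃ h : Fin n → ℕ, ∀ v w : Fin n, f v = some w → h w < h v

open Relation Function

namespace RootedForest

variable {α : Type*} {f g : α → Option α} {u v w r r' : α}

/-- `IsRootedForest` for parent functions on an arbitrary type. -/
def Acyclic (f : α → Option α) : Prop :=
  ∃ h : α → ℕ, ∀ v w, f v = some w → h w < h v

def Reaches (f : α → Option α) : α → α → Prop :=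
  ReflTransGen fun v w => f v = some w

theorem Reaches.le_of_height {h : α → ℕ} (hh : ∀ v w, f v = some w → h w < h v)
    (hvw : Reaches f v w) : h w ≤ h v := by
  induction hvw with
  | refl => rfl
  | tail _ hst ih => exact (hh _ _ hst).le.trans ih

theorem reaches_iff_of_eq_some (hv : f v = some w) : Reaches f v u ↔ v = u ∨ Reaches f w u := by
  unfold Reaches
  rw [ReflTransGen.cases_head_iff]
  refine or_congr_right ⟨?_, fun h => ⟨w, hv, h⟩⟩
  rintro ⟨c, hc, hcu⟩
  rwa [Option.some_injective _ (hv.symm.trans hc)]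

theorem Reaches.eq_of_eq_none (hr : f r = none) (hrw : Reaches f r w) : w = r := by
  rcases ReflTransGen.cases_head_iff.mp hrw with h | ⟨c, hc, -⟩
  · exact h.symm
  · simp [hr] at hc

theorem Reaches.eq_of_eq_none_of_eq_none (hr : f r = none) (hr' : f r' = none)
    (h : Reaches f v r) (h' : Reaches f v r') : r = r' := by
  have hU : Relator.RightUnique fun v w => f v = some w :=
    fun _ _ _ hb hc => Option.some_injective _ (hb.symm.trans hc)
  rcases ReflTransGen.total_of_right_unique hU h h' with H | H
  · exact (Reaches.eq_of_eq_none hr H).symm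
  · exact Reaches.eq_of_eq_none hr' H

theorem Acyclic.exists_root (hf : Acyclic f) (v : α) : ∃ r, f r = none ∧ Reaches f v r := by
  obtain ⟨h, hh⟩ := hf
  induction v using (measure h).wf.induction with
  | _ v ih =>
  cases hv : f v with
  | none => exact ⟨v, hv, .refl⟩
  | some w =>
    obtain ⟨r, hr, hwr⟩ := ih w (hh v w hv)
    exact ⟨r, hr, .head hv hwr⟩

section Update

variable [DecidableEq α]

theorem Acyclic.update_none (hg : Acyclic g) (u : α) : Acyclic (update g u none) := by
  obtain ⟨h, hh⟩ := hg
  refine ⟨h, fun x y hxy => hh x y ?_⟩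
  rcases eq_or_ne x u with rfl | hxu
  · simp at hxy
  · rwa [update_of_ne hxu] at hxy

/-- A height for the new forest: lift the old heights in the tree of `u` above `v`. -/
theorem Acyclic.update_some (hf : Acyclic f) (hu : f u = none) (hvu : ¬Reaches f v u) :
    Acyclic (update f u (some v)) := by
  classical
  obtain ⟨h, hh⟩ := hf
  refine ⟨fun x => if Reaches f x u then h x + h v + 1 else h x, fun x y hxy => ?_⟩
  rcases eq_or_ne x u with rfl | hxu
  · obtain rfl : v = y := by simpa using hxy
    have hxx : Reaches f x x := .refl
    simp only [hxx, hvu, if_true, if_false]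
    omega
  · rw [update_of_ne hxu] at hxy
    have hyx := hh x y hxy
    by_cases hyu : Reaches f y u
    · simp [(reaches_iff_of_eq_some hxy).mpr (.inr hyu), hyu, hyx]
    · simp [reaches_iff_of_eq_some hxy, hxu, hyu, hyx]

theorem Acyclic.not_reaches_update_none (hg : Acyclic g) (huv : g u = some v) :
    ¬Reaches (update g u none) v u := by
  obtain ⟨h, hh⟩ := hg
  intro hvu
  have hle : h u ≤ h v := by
    refine Reaches.le_of_height hh (ReflTransGen.mono (fun x y hxy => ?_) _ _ hvu)
    rcases eq_or_ne x u with rfl | hxu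
    · simp at hxy
    · rwa [update_of_ne hxu] at hxy
  exact absurd (hh u v huv) (not_lt.mpr hle)

end Update

variable [Fintype α]

def roots (f : α → Option α) : Finset α := {v | f v = none}

open scoped Classical

noncomputable def graftings (f : α → Option α) : Finset (α × α) :=
  {p ∈ roots f ×ˢ univ | ¬Reaches f p.2 p.1}

/-- Every vertex lies in the tree of exactly one root. -/
theorem Acyclic.sum_card_reaches_roots (hf : Acyclic f) :
    ∑ r ∈ roots f, #{v | Reaches f v r} = Fintype.card α := by
  have hunique (v : α) : #((roots f).bipartiteAbove (Reaches f) v) = 1 := by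
    obtain ⟨r, hr, hvr⟩ := hf.exists_root v
    refine card_eq_one.mpr ⟨r, eq_singleton_iff_unique_mem.mpr ⟨by simp [roots, hr, hvr],
      fun r' hr' => ?_⟩⟩
    simp only [mem_bipartiteAbove, roots, mem_filter, mem_univ, true_and] at hr'
    exact Reaches.eq_of_eq_none_of_eq_none hr'.1 hr hr'.2 hvr
  have := sum_card_bipartiteAbove_eq_sum_card_bipartiteBelow (s := univ) (t := roots f)
    (Reaches f)
  simpa [hunique, bipartiteBelow] using this.symm

theorem Acyclic.card_graftings_add (hf : Acyclic f) :
    #(graftings f) + Fintype.card α = #(roots f) * Fintype.card α := by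
  have hgraft : #(graftings f) = ∑ r ∈ roots f, #{v | ¬Reaches f v r} := by
    simp only [graftings, card_filter, sum_product]
  have hsplit (r : α) : #{v | ¬Reaches f v r} + #{v | Reaches f v r} = Fintype.card α := by
    rw [add_comm, card_filter_add_card_filter_not, card_univ]
  calc #(graftings f) + Fintype.card α
      = ∑ r ∈ roots f, (#{v | ¬Reaches f v r} + #{v | Reaches f v r}) := by
        rw [hgraft, sum_add_distrib, hf.sum_card_reaches_roots]
    _ = #(roots f) * Fintype.card α := by simp [hsplit]

variable [DecidableEq α]

def edges (f : α → Option α) : Finset (α × α) := {p | f p.1 = some p.2}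

variable (α) in
noncomputable def forests (k : ℕ) : Finset (α → Option α) :=
  {f | Acyclic f ∧ #(roots f) = k}

theorem mem_forests {k : ℕ} : f ∈ forests α k ↔ Acyclic f ∧ #(roots f) = k := by
  simp [forests]

theorem card_edges_add_card_roots : #(edges f) + #(roots f) = Fintype.card α := by
  have hedges : #(edges f) = #{v | ¬f v = none} := by
    refine card_bij (fun p _ => p.1) (fun p hp => by simp_all [edges]) ?_ ?_
    · rintro ⟨u, v⟩ hp ⟨u', v'⟩ hp' rfl
      simp_all [edges]
    · intro u hu
      obtain ⟨v, hv⟩ := Option.ne_none_iff_exists'.mp (mem_filter.mp hu).2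
      exact ⟨(u, v), by simpa [edges] using hv, rfl⟩
  rw [hedges, add_comm, roots, card_filter_add_card_filter_not, card_univ]

theorem roots_update_some (hu : f u = none) :
    roots (update f u (some v)) = (roots f).erase u := by
  ext x
  rcases eq_or_ne x u with rfl | hx <;> simp [roots, *]

theorem roots_update_none : roots (update g u none) = insert u (roots g) := by
  ext x
  rcases eq_or_ne x u with rfl | hx <;> simp [roots, *]

theorem update_some_mem_forests {k : ℕ} (hf : f ∈ forests α (k + 1))
    (huv : (u, v) ∈ graftings f) : update f u (some v) ∈ forests α k := by
  rw [mem_forests] at hf ⊢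
  simp only [graftings, roots, mem_filter, mem_product, mem_univ, and_true, true_and] at huv
  refine ⟨hf.1.update_some huv.1 huv.2, ?_⟩
  rw [roots_update_some huv.1, card_erase_of_mem (by simp [roots, huv.1]), hf.2,
    Nat.add_sub_cancel]

theorem update_none_mem_forests {k : ℕ} (hg : g ∈ forests α k) (huv : (u, v) ∈ edges g) :
    update g u none ∈ forests α (k + 1) := by
  rw [mem_forests] at hg ⊢
  simp only [edges, mem_filter, mem_univ, true_and] at huv
  refine ⟨hg.1.update_none u, ?_⟩
  rw [roots_update_none, card_insert_of_notMem (by simp [roots, huv]), hg.2]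

theorem mem_edges_update_some : (u, v) ∈ edges (update f u (some v)) := by
  simp [edges]

theorem mem_graftings_update_none (hg : Acyclic g) (huv : (u, v) ∈ edges g) :
    (u, v) ∈ graftings (update g u none) := by
  simp only [edges, mem_filter, mem_univ, true_and] at huv
  simp [graftings, roots, hg.not_reaches_update_none huv]

theorem card_sigma_graftings_eq (k : ℕ) :
    #((forests α (k + 1)).sigma graftings) = #((forests α k).sigma edges) := by
  refine card_nbij' (fun x => ⟨update x.1 x.2.1 (some x.2.2), x.2⟩)
    (fun x => ⟨update x.1 x.2.1 none, x.2⟩) ?_ ?_ ?_ ?_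
  · rintro ⟨f, u, v⟩ hx
    rw [mem_coe, mem_sigma] at hx ⊢
    exact ⟨update_some_mem_forests hx.1 hx.2, mem_edges_update_some⟩
  · rintro ⟨g, u, v⟩ hx
    rw [mem_coe, mem_sigma] at hx ⊢
    exact ⟨update_none_mem_forests hx.1 hx.2,
      mem_graftings_update_none (mem_forests.mp hx.1).1 hx.2⟩
  · rintro ⟨f, u, v⟩ hx
    simp only [mem_coe, mem_sigma, graftings, roots, mem_filter, mem_product] at hx
    simp [← hx.2.1.1.2]
  · rintro ⟨g, u, v⟩ hx
    simp only [mem_coe, mem_sigma, edges, mem_filter] at hx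
    simp [← hx.2.2]

theorem card_forests_mul_sub (k : ℕ) :
    #(forests α k) * (Fintype.card α - k) = #(forests α (k + 1)) * (k * Fintype.card α) := by
  have hedges : ∀ g ∈ forests α k, #(edges g) = Fintype.card α - k := fun g hg => by
    have := card_edges_add_card_roots (f := g)
    rw [(mem_forests.mp hg).2] at this
    omega
  have hgraft : ∀ f ∈ forests α (k + 1), #(graftings f) = k * Fintype.card α := fun f hf => by
    have := (mem_forests.mp hf).1.card_graftings_add
    rw [(mem_forests.mp hf).2, add_mul, one_mul] at this
    omega
  have hcard := card_sigma_graftings_eq (α := α) k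
  rw [card_sigma, card_sigma, sum_congr rfl hgraft, sum_congr rfl hedges, sum_const, sum_const,
    smul_eq_mul, smul_eq_mul] at hcard
  exact hcard.symm

theorem forests_card_self : forests α (Fintype.card α) = {fun _ => none} := by
  ext f
  rw [mem_forests, mem_singleton, card_eq_iff_eq_univ]
  constructor
  · rintro ⟨-, h⟩
    funext v
    have hv : v ∈ roots f := h ▸ mem_univ v
    simpa [roots] using hv
  · rintro rfl
    exact ⟨⟨fun _ => 0, by simp⟩, by ext; simp [roots]⟩

theorem card_forests {k : ℕ} (hk : 1 ≤ k) (hkn : k ≤ Fintype.card α) :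
    #(forests α k) =
      (Fintype.card α - 1).choose (k - 1) * Fintype.card α ^ (Fintype.card α - k) := by
  induction hkn using Nat.decreasingInduction with
  | self => simp [forests_card_self]
  | of_succ k hkn ih =>
    set n := Fintype.card α
    obtain ⟨j, rfl⟩ : ∃ j, k = j + 1 := ⟨k - 1, by omega⟩
    have hpow : n ^ (n - (j + 1)) = n * n ^ (n - (j + 2)) := by
      rw [← pow_succ']; congr 1; omega
    have hchoose := Nat.choose_succ_right_eq (n - 1) j
    rw [show n - 1 - j = n - (j + 1) by omega] at hchoose
    apply Nat.eq_of_mul_eq_mul_right (by omega : 0 < n - (j + 1))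
    rw [card_forests_mul_sub, ih (by omega), hpow]
    simp only [Nat.add_sub_cancel]
    calc (n - 1).choose (j + 1) * n ^ (n - (j + 2)) * ((j + 1) * n)
        = (n - 1).choose (j + 1) * (j + 1) * (n * n ^ (n - (j + 2))) := by ring
      _ = _ := by rw [hchoose]; ring

end RootedForest

theorem count_rooted_forests (n k : ℕ) (hk : 1 ≤ k) (hkn : k ≤ n) :
    Nat.card {f : Fin n → Option (Fin n) //
        IsRootedForest f ∧
          (Finset.univ.filter (fun v => f v = none)).card = k} =
      Nat.choose (n - 1) (k - 1) * n ^ (n - k) := by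
  classical
  have hcount := RootedForest.card_forests (α := Fin n) hk (by simpa using hkn)
  rw [Fintype.card_fin] at hcount
  rw [← hcount, Nat.card_eq_fintype_card, Fintype.card_subtype]
  rfl
end

section
/- For positive integers a, b, n, the number of (a,b,...,b)-parking functions of length n equals a·(a+bn)^{n-1}. That is, the number of sequences (c_1,...,c_n) of positive integers whose nondecreasing rearrangement c_{(1)} ≤ ... ≤ c_{(n)} satisfies c_{(i)} ≤ a + (i-1)b for all i, equals a(a+bn)^{n-1}. -/
/-!
Put `m = a + b * n`. Reflecting `c ↦ m - c` turns parking functions into maps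
`y : Fin n → ℤ/m` in which every arc `[0, u)` of the circle carries fewer than `u / b` points
(`IsSparse`). For a fixed `y`, the walk that steps `+1` at every position `r` and `-b` for every
point sitting at `r` rises by at most one per step and by `m - b * n = a` per turn of the circle.
The rotations `t` making `y - t` sparse are exactly the strict future minima of the walk in
`[0, m)`, and the future minimum of the walk grows by one exactly at those times, so there are
exactly `a` of them. Counting the pairs `(y, t)` in two ways gives `m * #sparse = m ^ n * a`.
-/

open Finset

/-- `c` rearranges nondecreasingly so that the `i`-th order statistic is at most `u i`. -/
def SortedLE {n : ℕ} (c u : Fin n → ℕ) : Prop :=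
  ∃ σ : Equiv.Perm (Fin n),
    (∀ i j : Fin n, i ≤ j → c (σ i) ≤ c (σ j)) ∧ ∀ i, c (σ i) ≤ u i

section StrictFutureMin

variable {S : ℕ → ℤ} {m a : ℕ}

theorem exists_ge_forall_ge_le (hS : ∀ j, S (j + m) = S j + a) (hm : 0 < m) (t : ℕ) :
    ∃ j ≥ t, ∀ i ≥ t, S j ≤ S i := by
  obtain ⟨j, hj, hmin⟩ := (Ico t (t + m)).exists_min_image S ⟨t, by simp [hm]⟩
  refine ⟨j, (mem_Ico.1 hj).1, fun i => ?_⟩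
  induction i using Nat.strong_induction_on with
  | _ i ih =>
    intro hi
    by_cases hlt : i < t + m
    · exact hmin i (mem_Ico.2 ⟨hi, hlt⟩)
    · have hshift := hS (i - m)
      rw [Nat.sub_add_cancel (by omega)] at hshift
      have := ih (i - m) (by omega) (by omega)
      omega

theorem forall_Icc_lt_iff_forall_lt (hS : ∀ j, S (j + m) = S j + a) (hm : 0 < m) (t : ℕ) :
    (∀ u ∈ Icc 1 m, S t < S (t + u)) ↔ ∀ j > t, S t < S j := by
  refine ⟨fun h j => ?_, fun h u hu => h _ (by grind)⟩
  induction j using Nat.strong_induction_on with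
  | _ j ih =>
    intro hj
    by_cases hle : j ≤ t + m
    · simpa [Nat.add_sub_cancel' hj.le] using h (j - t) (by grind)
    · have hshift := hS (j - m)
      rw [Nat.sub_add_cancel (by omega)] at hshift
      have := ih (j - m) (by omega) (by omega)
      omega

theorem card_filter_forall_Icc_lt (hS : ∀ j, S (j + m) = S j + a)
    (hstep : ∀ j, S (j + 1) ≤ S j + 1) (hm : 0 < m) :
    #{t ∈ range m | ∀ u ∈ Icc (1 : ℕ) m, S t < S (t + u)} = a := by
  classical
  rw [filter_congr fun t _ => forall_Icc_lt_iff_forall_lt hS hm t]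
  choose J hJt hJ using exists_ge_forall_ge_le hS hm
  -- the future minimum `min_{j ≥ t} S j`
  set h : ℕ → ℤ := fun t => S (J t)
  have h_eq_min : ∀ t, h t = min (S t) (h (t + 1)) := by
    intro t
    refine le_antisymm (le_min (hJ t t le_rfl) (hJ t _ (by grind))) ?_
    rcases (hJt t).eq_or_lt with heq | hlt
    · exact (min_le_left _ _).trans_eq (congrArg S heq)
    · exact (min_le_right _ _).trans (hJ (t + 1) (J t) hlt)
  have h_good : ∀ t, (∀ j > t, S t < S j) ↔ S t < h (t + 1) := fun t =>
    ⟨fun hg => hg _ (by grind), fun hlt j hj => hlt.trans_le (hJ (t + 1) j hj)⟩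
  have h_succ : ∀ t, h (t + 1) = h t + if ∀ j > t, S t < S j then 1 else 0 := by
    intro t
    split_ifs with hg
    · rw [h_good] at hg
      have := hJ (t + 1) (t + 1) le_rfl
      rw [h_eq_min t, min_eq_left hg.le]
      linarith [hstep t]
    · rw [h_good, not_lt] at hg
      rw [h_eq_min t, min_eq_right hg, add_zero]
  have h_period : h m = h 0 + a := by
    have h1 := hJ m (J 0 + m) (by omega)
    have h2 := hJ 0 (J m - m) (Nat.zero_le _)
    have h3 := hS (J m - m)
    rw [Nat.sub_add_cancel (hJt m)] at h3
    have := hS (J 0)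
    simp only [h]
    omega
  have : (#{t ∈ range m | ∀ j > t, S t < S j} : ℤ) = h m - h 0 := by
    rw [← sum_range_sub, card_filter]
    push_cast
    exact sum_congr rfl fun t _ => by rw [h_succ]; ring
  omega

end StrictFutureMin

section Circle

variable {ι : Type*} [Fintype ι] {m : ℕ}

def IsSparse (b : ℕ) (y : ι → ZMod m) : Prop :=
  ∀ u ∈ Icc 1 m, b * #{i | (y i).val < u} < u

instance (b : ℕ) : DecidablePred (IsSparse (ι := ι) (m := m) b) := fun y => by
  unfold IsSparse; infer_instance

def walk (b : ℕ) (f : ι → ZMod m) (j : ℕ) : ℤ :=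
  j - b * ∑ r ∈ range j, #{i | f i = r}

variable [NeZero m]

theorem card_filter_val_sub_lt (f : ι → ZMod m) (t : ℕ) {u : ℕ} (hu : u ≤ m) :
    #{i | (f i - t).val < u} = ∑ q ∈ range u, #{i | f i = ((t + q : ℕ) : ZMod m)} := by
  rw [card_eq_sum_card_fiberwise (f := fun i => (f i - t).val) (t := range u)
    fun i hi => by simpa using hi]
  refine sum_congr rfl fun q hq => congrArg card ?_
  rw [filter_filter]
  refine filter_congr fun i _ => ⟨fun ⟨_, hq'⟩ => ?_, fun h => ?_⟩
  · rw [Nat.cast_add, ← hq', ZMod.natCast_zmod_val, add_sub_cancel]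
  · have hqm : q < m := (mem_range.1 hq).trans_le hu
    rw [h, Nat.cast_add, add_sub_cancel_left, ZMod.val_cast_of_lt hqm]
    exact ⟨mem_range.1 hq, rfl⟩

theorem walk_add (b : ℕ) (f : ι → ZMod m) (t : ℕ) {u : ℕ} (hu : u ≤ m) :
    walk b f (t + u) = walk b f t + u - b * #{i | (f i - t).val < u} := by
  rw [walk, walk, sum_range_add, card_filter_val_sub_lt f t hu]
  push_cast
  ring

theorem card_filter_isSparse_sub {a b : ℕ} (f : ι → ZMod m)
    (hm : m = a + b * Fintype.card ι) :
    #{t ∈ range m | IsSparse b (f - fun _ => ((t : ℕ) : ZMod m))} = a := by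
  have hS : ∀ j, walk b f (j + m) = walk b f j + a := by
    intro j
    have hm' : (m : ℤ) = a + b * Fintype.card ι := by exact_mod_cast hm
    rw [walk_add b f j le_rfl, filter_true_of_mem fun i _ => ZMod.val_lt _, card_univ, hm']
    ring
  have hstep : ∀ j, walk b f (j + 1) ≤ walk b f j + 1 := by
    intro j
    rw [walk_add b f j NeZero.one_le, Nat.cast_one]
    exact sub_le_self _ (by positivity)
  rw [← card_filter_forall_Icc_lt hS hstep (NeZero.pos m)]
  refine congrArg card (filter_congr fun t _ => forall₂_congr fun u hu => ?_)
  rw [walk_add b f t (mem_Icc.1 hu).2]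
  simp only [Pi.sub_apply]
  omega

end Circle

theorem sum_card_filter_sub_eq {V α : Type*} [AddGroup V] [Fintype V] (P : V → Prop)
    [DecidablePred P] (s : Finset α) (c : α → V) :
    ∑ y : V, #{t ∈ s | P (y - c t)} = #s * #{y | P y} := by
  simp only [card_filter]
  rw [sum_comm]
  have shift : ∀ t, ∑ y : V, (if P (y - c t) then 1 else 0) = ∑ y : V, if P y then 1 else 0 :=
    fun t => Fintype.sum_equiv (Equiv.subRight (c t)) _ _ fun _ => rfl
  simp only [shift, sum_const, smul_eq_mul]

theorem sortedLE_iff_lt_card {n : ℕ} (c u : Fin n → ℕ) :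
    SortedLE c u ↔ ∀ k : Fin n, (k : ℕ) < #{i | c i ≤ u k} := by
  constructor
  · rintro ⟨σ, hmono, hle⟩ k
    have hsub : (Iic k).image σ ⊆ ({i | c i ≤ u k} : Finset (Fin n)) := by
      simp only [subset_iff, mem_image, mem_Iic, mem_filter_univ]
      rintro _ ⟨j, hj, rfl⟩
      exact (hmono j k hj).trans (hle k)
    simpa [card_image_of_injective _ σ.injective] using card_le_card hsub
  · intro h
    refine ⟨Tuple.sort c, fun i j hij => Tuple.monotone_sort c hij, fun k => ?_⟩
    by_contra! hk
    have hsub : ({i | c i ≤ u k} : Finset (Fin n)) ⊆ (Iio k).image (Tuple.sort c) := by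
      simp only [subset_iff, mem_image, mem_Iio, mem_filter_univ]
      refine fun i hi => ⟨(Tuple.sort c).symm i, ?_, by simp⟩
      by_contra! hge
      have := Tuple.monotone_sort c hge
      simp only [Function.comp_apply, Equiv.apply_symm_apply] at this
      omega
    have := card_le_card hsub
    rw [card_image_of_injective _ (Tuple.sort c).injective, Fin.card_Iio] at this
    exact (h k).not_ge this

theorem SortedLE.exists_le {n : ℕ} {c u : Fin n → ℕ} (h : SortedLE c u) (i : Fin n) :
    ∃ k, c i ≤ u k := by
  obtain ⟨σ, -, hle⟩ := h
  exact ⟨σ.symm i, by simpa using hle (σ.symm i)⟩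

theorem forall_add_mul_iff_forall_Icc {N : ℕ → ℕ} {a b n : ℕ} (hN : Antitone N)
    (hNn : ∀ w, N w ≤ n) (hN0 : N (a + b * n) = 0) :
    (∀ k < n, N (a + k * b) + k < n) ↔
      ∀ u ∈ Icc 1 (a + b * n), b * N (a + b * n - u) < u := by
  constructor
  · intro h u hu
    rw [mem_Icc] at hu
    set w := a + b * n - u
    rcases lt_or_ge w a with hwa | haw
    · have := Nat.mul_le_mul_left b (hNn w)
      omega
    · have hb : 0 < b := Nat.pos_of_ne_zero (by rintro rfl; omega)
      set k := (w - a) / b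
      have hkw : k * b ≤ w - a := Nat.div_mul_le_self _ _
      have hwk : w - a < k * b + b := Nat.lt_div_mul_add hb
      have hkn : k < n := Nat.lt_of_mul_lt_mul_right (a := b) (by rw [mul_comm n]; omega)
      have hNw : N w + k + 1 ≤ n := by
        have := hN (show a + k * b ≤ w by omega)
        have := h k hkn
        omega
      have := Nat.mul_le_mul_left b hNw
      rw [mul_add, mul_add, mul_one, mul_comm b k] at this
      omega
  · intro h k hk
    rcases lt_or_ge (a + k * b) (a + b * n) with hlt | hge
    · have := h (b * n - k * b) (mem_Icc.2 ⟨by omega, by omega⟩)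
      rw [show a + b * n - (b * n - k * b) = a + k * b by omega] at this
      have : b * (N (a + k * b) + k) < b * n := by rw [mul_add, mul_comm b k]; omega
      exact Nat.lt_of_mul_lt_mul_left this
    · have := hN hge
      omega

theorem sortedLE_iff_isSparse {a b n : ℕ} (c : Fin n → ℕ) (hc1 : ∀ i, 1 ≤ c i)
    (hcm : ∀ i, c i ≤ a + b * n) :
    SortedLE c (fun i => a + i * b) ↔
      IsSparse b (fun i => ((a + b * n - c i : ℕ) : ZMod (a + b * n))) := by
  set m := a + b * n
  set N : ℕ → ℕ := fun w => #{i | w < c i}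
  have hN : Antitone N := fun w w' h => card_le_card fun i => by simp only [mem_filter_univ]; omega
  have hNn : ∀ w, N w ≤ n := fun w => (card_le_univ _).trans_eq (Fintype.card_fin n)
  have hN0 : N m = 0 := card_eq_zero.2 (filter_eq_empty_iff.2 fun i _ => by have := hcm i; omega)
  rw [sortedLE_iff_lt_card, Fin.forall_iff, IsSparse]
  refine (forall₂_congr fun k _ => ?_).trans <|
    (forall_add_mul_iff_forall_Icc hN hNn hN0).trans (forall₂_congr fun u hu => ?_)
  · have := card_filter_add_card_filter_not (s := univ) fun i => c i ≤ a + k * b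
    simp only [not_le, card_univ, Fintype.card_fin] at this
    simp only [N]
    omega
  · have hu := mem_Icc.1 hu
    have hval : ∀ i, ((m - c i : ℕ) : ZMod m).val = m - c i := fun i =>
      ZMod.val_cast_of_lt (by have := hc1 i; have := hcm i; omega)
    have hw : ∀ i, m - c i < u ↔ m - u < c i := fun i => by have := hcm i; omega
    simp only [N, hval, hw]
    exact Iff.rfl

theorem card_sortedLE_eq_card_isSparse (a b n : ℕ) [NeZero (a + b * n)] :
    Nat.card {c : Fin n → ℕ // (∀ i, 1 ≤ c i) ∧ SortedLE c (fun i => a + i.1 * b)} =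
      #{y : Fin n → ZMod (a + b * n) | IsSparse b y} := by
  rw [← Fintype.card_subtype, ← Nat.card_eq_fintype_card]
  set m := a + b * n
  have hcm : ∀ c, SortedLE c (fun i : Fin n => a + i.1 * b) → ∀ i, c i ≤ m := by
    intro c hc i
    obtain ⟨k, hk⟩ := hc.exists_le i
    have := Nat.mul_le_mul_right b k.2.le
    rw [mul_comm n] at this
    omega
  refine Nat.card_congr
    { toFun := fun c => ⟨fun i => ((m - c.1 i : ℕ) : ZMod m),
        (sortedLE_iff_isSparse c.1 c.2.1 (hcm _ c.2.2)).1 c.2.2⟩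
      invFun := fun y => ⟨fun i => m - (y.1 i).val, fun i => ?_, ?_⟩
      left_inv := fun c => ?_
      right_inv := fun y => ?_ }
  · have := ZMod.val_lt (y.1 i)
    dsimp only
    omega
  · refine (sortedLE_iff_isSparse _ (fun i => ?_) fun i => Nat.sub_le _ _).2 ?_
    · have := ZMod.val_lt (y.1 i); omega
    · simpa [Nat.sub_sub_self (ZMod.val_lt _).le] using y.2
  · ext i
    have := hcm _ c.2.2 i
    simp only [ZMod.val_cast_of_lt (show m - c.1 i < m by have := c.2.1 i; omega)]
    omega
  · ext i
    simp [Nat.sub_sub_self (ZMod.val_lt _).le]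

theorem count_ab_dots_b_parking_general (a b n : ℕ) (ha : 0 < a) (hn : 0 < n) :
    Nat.card {c : Fin n → ℕ //
        (∀ i, 1 ≤ c i) ∧ SortedLE c (fun i => a + i.1 * b)} =
      a * (a + b * n) ^ (n - 1) := by
  obtain ⟨k, rfl⟩ := Nat.exists_eq_add_one_of_ne_zero hn.ne'
  have : NeZero (a + b * (k + 1)) := ⟨by omega⟩
  rw [card_sortedLE_eq_card_isSparse, Nat.add_sub_cancel]
  set m := a + b * (k + 1)
  have hcount : ∀ y : Fin (k + 1) → ZMod m,
      #{t ∈ range m | IsSparse b (y - fun _ => ((t : ℕ) : ZMod m))} = a :=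
    fun y => card_filter_isSparse_sub y (by rw [Fintype.card_fin])
  have hdouble :=
    sum_card_filter_sub_eq (IsSparse b) (range m) fun t (_ : Fin (k + 1)) => (t : ZMod m)
  simp only [hcount, sum_const, card_univ, Fintype.card_fun, ZMod.card, Fintype.card_fin,
    card_range, smul_eq_mul] at hdouble
  refine Nat.eq_of_mul_eq_mul_left (NeZero.pos m) ?_
  rw [← hdouble]
  ring

theorem count_ab_dots_b_parking (a b n : ℕ) (ha : 0 < a) (hb : 0 < b) (hn : 0 < n) :
    Nat.card {c : Fin n → ℕ //
        (∀ i, 1 ≤ c i) ∧ SortedLE c (fun i => a + i.1 * b)} =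
      a * (a + b * n) ^ (n - 1) :=
  count_ab_dots_b_parking_general a b n ha hn
end

section
/- Let PF_n denote the set of classical parking functions of length n, i.e., sequences (c_1,...,c_n) of positive integers whose nondecreasing rearrangement satisfies c_{(i)} ≤ i. Let Z(c) be the number of entries of c equal to 1. Then Σ_{c ∈ PF_n} q^{Z(c)} = q·(q+n)^{n-1} as a polynomial identity in q. -/
open Finset
open scoped Classical

/-- Classical parking functions of length `n` : sequences in `{1,…,n}ⁿ` whose `i`-th
smallest entry is at most `i`. -/
noncomputable def parkFinset (n : ℕ) : Finset (Fin n → ℕ) :=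
  (Fintype.piFinset fun _ : Fin n => Finset.Icc 1 n).filter
    (fun c => SortedLE c (fun i => i.1 + 1))

/-!
Split a sequence `d` according to the set `S` of its entries that are at most `a`. The entries in
`S` are arbitrary in `[1, a]`, and the remaining ones, lowered by `a`, must form a parking function
of length `n - #S` in which the `(j+1)`-st smallest entry is at most `#S + j`. For `a = 1` this
gives `∑ q ^ Z(c) = ∑ₖ C(n, k) q ^ k P(n - k, k)`, where `P(m, k)` counts these shifted parking
functions, and the same decomposition with `q = 1` shows `P(m, k) = k (k + m) ^ (m - 1)` by
induction on `m`. Abel's identity `∑ₖ C(n, k) k x ^ k n ^ (n - k) = n x (x + n) ^ (n - 1)` then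
evaluates both sums.
-/

open Fintype

theorem sum_range_choose_mul_mul_pow {R : Type*} [CommSemiring R] (n : ℕ) (x y : R) :
    ∑ k ∈ range (n + 1), (n.choose k : R) * (k * x ^ k * y ^ (n - k)) =
      n * x * (x + y) ^ (n - 1) := by
  cases n with
  | zero => simp
  | succ m =>
    have hterm : ∀ k ∈ range (m + 1), ((m + 1).choose (k + 1) : R) *
        ((k + 1 : ℕ) * x ^ (k + 1) * y ^ (m + 1 - (k + 1))) =
          (m + 1) * x * (x ^ k * y ^ (m - k) * m.choose k) := by
      intro k _
      have hchoose : ((m + 1).choose (k + 1) * (k + 1) : R) = (m + 1) * m.choose k := by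
        simpa using congrArg (Nat.cast : ℕ → R) (Nat.add_one_mul_choose_eq m k).symm
      calc _ = ((m + 1).choose (k + 1) * (k + 1) : R) * (x ^ k * x * y ^ (m - k)) := by
            rw [Nat.add_sub_add_right, pow_succ, Nat.cast_add_one]; ring
        _ = _ := by rw [hchoose]; ring
    rw [sum_range_succ', sum_congr rfl hterm, ← mul_sum, ← add_pow]
    simp

lemma card_filter_comp_perm {n : ℕ} (p : Fin n → Prop) [DecidablePred p]
    (σ : Equiv.Perm (Fin n)) : #{k | p (σ k)} = #{k | p k} :=
  card_equiv σ (by simp)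

theorem sortedLE_iff {n : ℕ} (c u : Fin n → ℕ) :
    SortedLE c u ↔ ∀ i : Fin n, (i : ℕ) < #{k | c k ≤ u i} := by
  constructor
  · rintro ⟨σ, hmono, hle⟩ i
    rw [← card_filter_comp_perm (c · ≤ u i) σ]
    exact (Tuple.lt_card_le_iff_apply_le_of_monotone (f := c ∘ σ) (fun i j h => hmono i j h)).2
      (hle i)
  · intro h
    refine ⟨Tuple.sort c, fun i j hij => Tuple.monotone_sort c hij, fun i => ?_⟩
    refine (Tuple.lt_card_le_iff_apply_le_of_monotone (Tuple.monotone_sort c)).1 ?_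
    simpa only [Function.comp_apply, card_filter_comp_perm (c · ≤ u i)] using h i

/-- `d ∈ shiftedParkFinset ι a` iff the `(j+1)`-st smallest entry of `d` is at most `a + j`, so
`parkFinset n = shiftedParkFinset (Fin n) 1`. The bound `a + card ι` only serves to make the set
finite: it is implied by the other conditions (`mem_shiftedParkFinset`). -/
noncomputable def shiftedParkFinset (ι : Type*) [Fintype ι] (a : ℕ) : Finset (ι → ℕ) :=
  (piFinset fun _ : ι => Icc 1 (a + card ι)).filter
    fun d => ∀ j < card ι, j < #{i | d i ≤ a + j}

section ShiftedPark

variable {ι : Type*} [Fintype ι] {a : ℕ} {d : ι → ℕ}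

lemma card_subtype_notMem (S : Finset ι) : card {i // i ∉ S} = card ι - #S := by
  rw [Fintype.card_subtype_compl, Fintype.card_coe]

lemma le_of_forall_lt_card_filter (h : ∀ j < card ι, j < #{i | d i ≤ a + j}) (i : ι) :
    d i ≤ a + (card ι - 1) := by
  have hpos : 0 < card ι := card_pos_iff.2 ⟨i⟩
  have hall : #{i | d i ≤ a + (card ι - 1)} = card ι :=
    le_antisymm (card_le_univ _) (by have := h (card ι - 1) (by omega); omega)
  have hi : i ∈ ({i | d i ≤ a + (card ι - 1)} : Finset ι) := by
    rw [(card_eq_iff_eq_univ _).1 hall]; exact mem_univ i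
  simpa using hi

lemma mem_shiftedParkFinset :
    d ∈ shiftedParkFinset ι a ↔ (∀ i, 1 ≤ d i) ∧ ∀ j < card ι, j < #{i | d i ≤ a + j} := by
  simp only [shiftedParkFinset, mem_filter, mem_piFinset, mem_Icc]
  refine ⟨fun ⟨hd, h⟩ => ⟨fun i => (hd i).1, h⟩, fun ⟨hd, h⟩ => ⟨fun i => ⟨hd i, ?_⟩, h⟩⟩
  have := le_of_forall_lt_card_filter h i
  omega

lemma shiftedParkFinset_zero [Nonempty ι] : shiftedParkFinset ι 0 = ∅ := by
  refine eq_empty_of_forall_notMem fun d hd => ?_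
  obtain ⟨hd, h⟩ := mem_shiftedParkFinset.1 hd
  obtain ⟨i, hi⟩ := card_pos.1 (h 0 card_pos)
  have := hd i
  simp at hi
  omega

lemma card_filter_le_add_eq {S : Finset ι} (hS : ∀ i, d i ≤ a ↔ i ∈ S) (j : ℕ) :
    #{i | d i ≤ a + j} = #S + #{t : {i // i ∉ S} | d t - a ≤ j} := by
  rw [card_filter, card_filter, ← Fintype.sum_subtype_add_sum_subtype (· ∈ S)]
  congr 1
  · have hle : ∀ t : {i // i ∈ S}, d t ≤ a + j := fun t => ((hS t).2 t.2).trans (by omega)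
    simp [hle]
  · refine sum_congr rfl fun t _ => ?_
    have := (hS t).not.2 t.2
    congr 1
    exact propext (by omega)

lemma mem_shiftedParkFinset_and_iff {S : Finset ι} :
    d ∈ shiftedParkFinset ι a ∧ (∀ i, d i ≤ a ↔ i ∈ S) ↔
      (∀ i ∈ S, d i ∈ Icc 1 a) ∧ (∀ i ∉ S, a < d i) ∧
        (fun t : {i // i ∉ S} => d t - a) ∈ shiftedParkFinset {i // i ∉ S} #S := by
  have hS_le : #S ≤ card ι := card_le_univ S
  simp only [mem_shiftedParkFinset, mem_Icc, card_subtype_notMem]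
  constructor
  · rintro ⟨⟨hpos, hcount⟩, hS⟩
    have hlt : ∀ i ∉ S, a < d i := fun i hi => not_le.1 fun h => hi ((hS i).1 h)
    refine ⟨fun i hi => ⟨hpos i, (hS i).2 hi⟩, hlt, fun t => by have := hlt t t.2; omega,
      fun j hj => ?_⟩
    have := hcount (#S + j) (by omega)
    rw [card_filter_le_add_eq hS] at this
    omega
  · rintro ⟨hS, hlt, -, hcount⟩
    have hS' : ∀ i, d i ≤ a ↔ i ∈ S := fun i =>
      ⟨fun h => by_contra fun hi => (hlt i hi).not_ge h, fun hi => (hS i hi).2⟩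
    refine ⟨⟨fun i => ?_, fun j hj => ?_⟩, hS'⟩
    · by_cases hi : i ∈ S
      · exact (hS i hi).1
      · have := hlt i hi
        omega
    · rw [card_filter_le_add_eq hS']
      by_cases hj' : j < #S
      · omega
      · obtain ⟨j', rfl⟩ : ∃ j', j = #S + j' := ⟨j - #S, by omega⟩
        have := hcount j' (by omega)
        omega

lemma card_filter_shiftedParkFinset (S : Finset ι) :
    #{d ∈ shiftedParkFinset ι a | ∀ i, d i ≤ a ↔ i ∈ S} =
      a ^ #S * #(shiftedParkFinset {i // i ∉ S} #S) := by
  have hprod : a ^ #S * #(shiftedParkFinset {i // i ∉ S} #S) =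
      #((piFinset fun _ : S => Icc 1 a) ×ˢ shiftedParkFinset {i // i ∉ S} #S) := by
    simp [card_product]
  rw [hprod]
  refine card_nbij' (fun d => (fun s => d s, fun t => d t - a))
    (fun p i => if h : i ∈ S then p.1 ⟨i, h⟩ else p.2 ⟨i, h⟩ + a) ?_ ?_ ?_ ?_
  · intro d hd
    obtain ⟨hS, -, hd'⟩ := mem_shiftedParkFinset_and_iff.1 (mem_filter.1 hd)
    exact mem_product.2 ⟨mem_piFinset.2 fun s => hS s s.2, hd'⟩
  · rintro ⟨u, v⟩ huv
    obtain ⟨hu, hv⟩ := mem_product.1 huv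
    refine mem_filter.2 (mem_shiftedParkFinset_and_iff.2 ⟨fun i hi => ?_, fun i hi => ?_, ?_⟩)
    · simpa [hi] using mem_piFinset.1 hu ⟨i, hi⟩
    · have : 1 ≤ v ⟨i, hi⟩ := (mem_shiftedParkFinset.1 hv).1 ⟨i, hi⟩
      simp only [dif_neg hi]
      omega
    · convert hv using 1
      funext t
      simp [t.2]
  · intro d hd
    have hlt := (mem_shiftedParkFinset_and_iff.1 (mem_filter.1 hd)).2.1
    funext i
    by_cases hi : i ∈ S
    · simp [hi]
    · have := hlt i hi
      simp only [dif_neg hi]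
      omega
  · rintro ⟨u, v⟩ -
    ext s <;> simp [s.2]

theorem sum_shiftedParkFinset_pow {R : Type*} [CommSemiring R] (a : ℕ) (q : R) :
    ∑ d ∈ shiftedParkFinset ι a, q ^ #{i | d i ≤ a} =
      ∑ S ∈ (univ : Finset ι).powerset, (a * q) ^ #S * #(shiftedParkFinset {i // i ∉ S} #S) := by
  rw [← sum_fiberwise_of_maps_to (g := fun d => ({i | d i ≤ a} : Finset ι))
    (t := univ.powerset) fun _ _ => mem_powerset.2 (subset_univ _)]
  refine sum_congr rfl fun S _ => ?_
  have hfiber : {d ∈ shiftedParkFinset ι a | ({i | d i ≤ a} : Finset ι) = S} =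
      {d ∈ shiftedParkFinset ι a | ∀ i, d i ≤ a ↔ i ∈ S} :=
    filter_congr fun d _ => by simp [Finset.ext_iff]
  calc _ = ∑ d ∈ {d ∈ shiftedParkFinset ι a | ({i | d i ≤ a} : Finset ι) = S}, q ^ #S :=
        sum_congr rfl fun d hd => by rw [(mem_filter.1 hd).2]
    _ = _ := by
        rw [sum_const, hfiber, card_filter_shiftedParkFinset, nsmul_eq_mul, mul_pow]
        push_cast
        ring

lemma card_mul_sum_powerset_pow_mul_card_shiftedParkFinset {R : Type*} [CommSemiring R] (x : R)
    (h : ∀ S : Finset ι,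
      card ι * #(shiftedParkFinset {i // i ∉ S} #S) = #S * card ι ^ (card ι - #S)) :
    (card ι : R) * ∑ S ∈ (univ : Finset ι).powerset, x ^ #S * #(shiftedParkFinset {i // i ∉ S} #S) =
      card ι * x * (x + card ι) ^ (card ι - 1) := by
  have hterm : ∀ S ∈ (univ : Finset ι).powerset,
      (card ι : R) * (x ^ #S * #(shiftedParkFinset {i // i ∉ S} #S)) =
        x ^ #S * (#S * card ι ^ (card ι - #S)) := fun S _ => by
    rw [mul_left_comm]
    exact_mod_cast congrArg (x ^ #S * ·) (congrArg (Nat.cast : ℕ → R) (h S))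
  rw [mul_sum, sum_congr rfl hterm,
    sum_powerset_apply_card (fun k => x ^ k * (k * card ι ^ (card ι - k))), card_univ,
    ← sum_range_choose_mul_mul_pow]
  refine sum_congr rfl fun k _ => ?_
  rw [nsmul_eq_mul]
  ring

end ShiftedPark

-- For nonempty `ι` this is `#(shiftedParkFinset ι a) = a * (a + card ι) ^ (card ι - 1)`; the
-- multiplied-out form also holds for empty `ι`.
theorem card_shiftedParkFinset (ι : Type*) [Fintype ι] (a : ℕ) :
    (card ι + a) * #(shiftedParkFinset ι a) = a * (card ι + a) ^ card ι := by
  induction hn : card ι using Nat.strong_induction_on generalizing ι a with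
  | _ n ih =>
  rcases Nat.eq_zero_or_pos n with rfl | hpos
  · have : IsEmpty ι := card_eq_zero_iff.1 hn
    simp [shiftedParkFinset]
  have hcompl (S : Finset ι) :
      n * #(shiftedParkFinset {i // i ∉ S} #S) = #S * n ^ (n - #S) := by
    have hcard : card {i // i ∉ S} = n - #S := by rw [card_subtype_notMem, hn]
    rcases S.eq_empty_or_nonempty with rfl | hS
    · have : Nonempty {i // i ∉ (∅ : Finset ι)} := card_pos_iff.1 (by rw [hcard]; simpa)
      simp [shiftedParkFinset_zero]
    · have hle : #S ≤ n := hn ▸ card_le_univ S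
      have := ih (n - #S) (by have := hS.card_pos; omega) {i // i ∉ S} #S hcard
      rwa [Nat.sub_add_cancel hle] at this
  have hsum := sum_shiftedParkFinset_pow (ι := ι) a 1
  simp only [one_pow, sum_const, smul_eq_mul, mul_one, Nat.cast_id] at hsum
  have key := card_mul_sum_powerset_pow_mul_card_shiftedParkFinset a (hn ▸ hcompl)
  simp only [Nat.cast_id, hn, ← hsum] at key
  have hcard : #(shiftedParkFinset ι a) = a * (a + n) ^ (n - 1) :=
    Nat.eq_of_mul_eq_mul_left hpos (by rw [key]; ring)
  obtain ⟨m, rfl⟩ : ∃ m, n = m + 1 := ⟨n - 1, by omega⟩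
  rw [hcard, Nat.add_sub_cancel, pow_succ]
  ring

lemma card_mul_card_shiftedParkFinset_compl {ι : Type*} [Fintype ι] (S : Finset ι) :
    card ι * #(shiftedParkFinset {i // i ∉ S} #S) = #S * card ι ^ (card ι - #S) := by
  have := card_shiftedParkFinset {i // i ∉ S} #S
  rwa [card_subtype_notMem, Nat.sub_add_cancel (card_le_univ S)] at this

theorem parkFinset_eq_shiftedParkFinset (n : ℕ) : parkFinset n = shiftedParkFinset (Fin n) 1 := by
  ext c
  simp only [parkFinset, mem_filter, mem_piFinset, mem_Icc, sortedLE_iff, mem_shiftedParkFinset,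
    Fintype.card_fin]
  have hcount : (∀ i : Fin n, (i : ℕ) < #{k | c k ≤ i + 1}) ↔
      ∀ j < n, j < #{i | c i ≤ 1 + j} :=
    ⟨fun h j hj => by simpa [add_comm] using h ⟨j, hj⟩,
      fun h i => by simpa [add_comm] using h i i.2⟩
  rw [hcount]
  refine ⟨fun ⟨hb, hs⟩ => ⟨fun i => (hb i).1, hs⟩, fun ⟨hb, hs⟩ => ⟨fun i => ⟨hb i, ?_⟩, hs⟩⟩
  have := le_of_forall_lt_card_filter (ι := Fin n) (a := 1) (by simpa using hs) i
  simp only [Fintype.card_fin] at this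
  have := i.2
  omega

theorem q_analogue_classical (n : ℕ) (hn : 1 ≤ n) (q : ℝ) :
    ∑ c ∈ parkFinset n, q ^ (Finset.univ.filter (fun i => c i = 1)).card =
      q * (q + n) ^ (n - 1) := by
  have hones : ∀ c ∈ parkFinset n, #{i | c i = 1} = #{i | c i ≤ 1} := fun c hc => by
    rw [parkFinset_eq_shiftedParkFinset] at hc
    have hpos := (mem_shiftedParkFinset.1 hc).1
    exact congrArg card (filter_congr fun i _ => by have := hpos i; omega)
  have key := card_mul_sum_powerset_pow_mul_card_shiftedParkFinset (ι := Fin n) ((1 : ℕ) * q)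
    card_mul_card_shiftedParkFinset_compl
  rw [Fintype.card_fin] at key
  rw [Finset.sum_congr rfl fun c hc => by rw [hones c hc], parkFinset_eq_shiftedParkFinset,
    sum_shiftedParkFinset_pow]
  refine mul_left_cancel₀ (Nat.cast_ne_zero.2 (by omega) : (n : ℝ) ≠ 0) ?_
  rw [key]
  push_cast
  ring
end

section
/- Let u = (u_0,...,u_{n-1}) be a nondecreasing sequence of positive integers and let PF_n(u) be the number of sequences (c_1,...,c_n) of positive integers whose nondecreasing rearrangement satisfies c_{(i)} ≤ u_{i-1} for all i. Then PF_n(u), viewed as a polynomial in the variables u_0,...,u_{n-1} (via the Goncharov/inclusion-exclusion formula PF_n(u) = Σ over ordered set partitions), is homogeneous of degree n: PF_n(k·u) = k^n·PF_n(u) for any scalar k. -/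
open Finset

lemma ceil_le_iff {k c u : ℕ} (hk : 1 ≤ k) (hc : 1 ≤ c) (hu : 1 ≤ u) :
    (c - 1) / k + 1 ≤ u ↔ c ≤ k * u := by
  obtain ⟨v, rfl⟩ : ∃ v, u = v + 1 := ⟨u - 1, by omega⟩
  have h := Nat.div_le_iff_le_mul_add_pred hk (a := c - 1) (c := v)
  have hm : k * (v + 1) = k * v + k := by ring
  omega

lemma sortedLE_iff_s7 {n k : ℕ} (hk : 1 ≤ k) (u c : Fin n → ℕ)
    (hupos : ∀ i, 1 ≤ u i) (hc : ∀ i, 1 ≤ c i) :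
    SortedLE c (fun i => k * u i) ↔ SortedLE (fun i => (c i - 1) / k + 1) u := by
  constructor
  · rintro ⟨σ, hm, hle⟩
    refine ⟨σ, fun i j hij => ?_, fun i => ?_⟩
    · have := hm i j hij
      exact Nat.add_le_add_right (Nat.div_le_div_right (Nat.sub_le_sub_right this 1)) 1
    · exact (ceil_le_iff hk (hc _) (hupos i)).mpr (hle i)
  · rintro ⟨τ, hτm, hτle⟩
    set d : Fin n → ℕ := fun i => (c i - 1) / k + 1 with hd
    set σ := Tuple.sort c with hσ
    have hcm : Monotone (c ∘ σ) := Tuple.monotone_sort c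
    have hdm : Monotone (d ∘ σ) := fun i j hij => by
      have := hcm hij
      exact Nat.add_le_add_right (Nat.div_le_div_right (Nat.sub_le_sub_right this 1)) 1
    have hdτ : Monotone (d ∘ τ) := fun i j hij => hτm i j hij
    have heq : d ∘ σ = d ∘ τ := Tuple.unique_monotone hdm hdτ
    refine ⟨σ, fun i j hij => hcm hij, fun i => ?_⟩
    have h1 : d (σ i) ≤ u i := by
      have := congrFun heq i
      simp only [Function.comp] at this
      rw [this]; exact hτle i
    exact (ceil_le_iff hk (hc _) (hupos i)).mp h1

/-- Homogeneity of the number of `u`-parking functions: scaling all thresholds by `k`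
multiplies the count by `k ^ n`. -/
theorem u_parking_homogeneous (n k : ℕ) (hn : 1 ≤ n) (hk : 1 ≤ k)
    (u : Fin n → ℕ) (hu : Monotone u) (hupos : ∀ i, 1 ≤ u i) :
    Nat.card {c : Fin n → ℕ // (∀ i, 1 ≤ c i) ∧ SortedLE c (fun i => k * u i)} =
      k ^ n * Nat.card {c : Fin n → ℕ // (∀ i, 1 ≤ c i) ∧ SortedLE c u} := by
  have hk0 : 0 < k := hk
  have e : {c : Fin n → ℕ // (∀ i, 1 ≤ c i) ∧ SortedLE c (fun i => k * u i)} ≃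
      (Fin n → Fin k) × {c : Fin n → ℕ // (∀ i, 1 ≤ c i) ∧ SortedLE c u} := by
    refine
      { toFun := fun ⟨c, hc1, hc2⟩ =>
          (fun i => ⟨(c i - 1) % k, Nat.mod_lt _ hk0⟩,
            ⟨fun i => (c i - 1) / k + 1, fun i => Nat.succ_le_succ (Nat.zero_le _),
              (sortedLE_iff_s7 hk u c hupos hc1).mp hc2⟩)
        invFun := fun ⟨r, d, hd1, hd2⟩ =>
          ⟨fun i => k * (d i - 1) + (r i : ℕ) + 1, fun i => Nat.succ_le_succ (Nat.zero_le _), ?_⟩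
        left_inv := ?_
        right_inv := ?_ }
    · -- SortedLE of reconstructed c
      have hc1 : ∀ i, 1 ≤ k * (d i - 1) + (r i : ℕ) + 1 := fun i => by omega
      rw [sortedLE_iff_s7 hk u _ hupos hc1]
      have : (fun i => (k * (d i - 1) + (r i : ℕ) + 1 - 1) / k + 1) = d := by
        funext i
        have hr : (r i : ℕ) < k := (r i).isLt
        have : (k * (d i - 1) + (r i : ℕ)) / k = d i - 1 := by
          rw [Nat.mul_add_div hk0]
          simp [Nat.div_eq_of_lt hr]
        simp only [Nat.add_sub_cancel, this]
        have := hd1 i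
        omega
      rw [this]; exact hd2
    · rintro ⟨c, hc1, hc2⟩
      ext i
      simp only [Nat.add_sub_cancel]
      have h := Nat.div_add_mod (c i - 1) k
      have := hc1 i
      omega
    · rintro ⟨r, d, hd1, hd2⟩
      have hr : ∀ i, ((r i : ℕ)) < k := fun i => (r i).isLt
      refine Prod.ext ?_ ?_
      · funext i
        apply Fin.ext
        simp only [Nat.add_sub_cancel]
        rw [Nat.mul_add_mod]
        exact Nat.mod_eq_of_lt (hr i)
      · apply Subtype.ext
        funext i
        simp only [Nat.add_sub_cancel]
        rw [Nat.mul_add_div hk0]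
        have := hd1 i
        have := Nat.div_eq_of_lt (hr i)
        omega
  rw [Nat.card_congr e, Nat.card_prod]
  congr 1
  simp [Nat.card_eq_fintype_card]
end

section
/- For coprime positive integers a and b, the number of (a,b)-parking functions of length b equals a^{b-1}; concretely, the number of sequences (c_1,...,c_b) of nonnegative integers whose nondecreasing rearrangement c_{(1)} ≤ ... ≤ c_{(b)} satisfies c_{(i)} ≤ ⌊(i-1)a/b⌋ for all i = 1, ..., b equals a^{b-1}. -/
open Finset

namespace RationalParking

/-- Count of entries of `c` that are `< v`. -/
def cnt {n : ℕ} (c : Fin n → ℕ) (v : ℕ) : ℕ :=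
  (Finset.univ.filter fun i => c i < v).card

/-- The fundamental "excess" function. -/
def gfun (a b : ℕ) {n : ℕ} (c : Fin n → ℕ) (v : ℕ) : ℤ :=
  (a : ℤ) * cnt c v - v * b

lemma cnt_le {n : ℕ} (c : Fin n → ℕ) (v : ℕ) : cnt c v ≤ n := by
  classical
  calc cnt c v ≤ Finset.univ.card := Finset.card_filter_le _ _
  _ = n := by simp

lemma cnt_zero {n : ℕ} (c : Fin n → ℕ) : cnt c 0 = 0 := by
  simp [cnt]

lemma cnt_top {a n : ℕ} (c : Fin n → ℕ) (hc : ∀ i, c i < a) : cnt c a = n := by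
  classical
  rw [cnt, Finset.filter_true_of_mem (fun i _ => hc i)]
  simp

lemma sortedLE_iff {n : ℕ} (c u : Fin n → ℕ) (hu : Monotone u) :
    SortedLE c u ↔ ∀ v : ℕ,
      (Finset.univ.filter fun i => u i < v).card ≤ (Finset.univ.filter fun i => c i < v).card := by
  classical
  constructor
  · rintro ⟨σ, hσ, hle⟩ v
    apply Finset.card_le_card_of_injOn σ
    · intro i hi
      simp only [Finset.mem_coe, Finset.mem_filter, Finset.mem_univ, true_and] at *
      exact lt_of_le_of_lt (hle i) hi
    · exact σ.injective.injOn
  · intro h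
    refine ⟨Tuple.sort c, fun i j hij => Tuple.monotone_sort c hij, ?_⟩
    intro i
    by_contra hlt
    push_neg at hlt
    set v := u i + 1 with hv
    have h1 : (i : ℕ) + 1 ≤ (Finset.univ.filter fun j => u j < v).card := by
      have hsub : Finset.Iic i ⊆ Finset.univ.filter fun j => u j < v := by
        intro j hj
        simp only [Finset.mem_filter, Finset.mem_univ, true_and]
        exact lt_of_le_of_lt (hu (Finset.mem_Iic.mp hj)) (Nat.lt_succ_self _)
      calc (i : ℕ) + 1 = (Finset.Iic i).card := (Fin.card_Iic i).symm
        _ ≤ _ := Finset.card_le_card hsub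
    have hcard : (Finset.univ.filter fun j => c j < v).card
        = (Finset.univ.filter fun j => c (Tuple.sort c j) < v).card := by
      apply Finset.card_equiv (Tuple.sort c).symm
      intro j
      simp
    have h2 : (Finset.univ.filter fun j => c (Tuple.sort c j) < v).card ≤ (i : ℕ) := by
      have hsub : (Finset.univ.filter fun j => c (Tuple.sort c j) < v) ⊆ Finset.Iio i := by
        intro j hj
        simp only [Finset.mem_filter, Finset.mem_univ, true_and] at hj
        simp only [Finset.mem_Iio]
        by_contra hij
        push_neg at hij
        have hmono := Tuple.monotone_sort c hij
        simp only [Function.comp_apply] at hmono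
        omega
      calc (Finset.univ.filter fun j => c (Tuple.sort c j) < v).card ≤ (Finset.Iio i).card :=
            Finset.card_le_card hsub
        _ = (i : ℕ) := Fin.card_Iio i
    have h3 := h v
    omega

lemma Mcrit {a b v n : ℕ} (ha : 0 < a) (hn : n < b) :
    ((Finset.univ.filter fun i : Fin b => i.1 * a < v * b).card ≤ n) ↔ v * b ≤ n * a := by
  classical
  constructor
  · intro h
    by_contra hcon
    push_neg at hcon
    have hsub : Finset.Iic (⟨n, hn⟩ : Fin b) ⊆
        Finset.univ.filter fun i : Fin b => i.1 * a < v * b := by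
      intro j hj
      simp only [Finset.mem_filter, Finset.mem_univ, true_and]
      have hj' : j ≤ (⟨n, hn⟩ : Fin b) := Finset.mem_Iic.mp hj
      have hjn : (j : ℕ) ≤ n := hj'
      have : (j : ℕ) * a ≤ n * a := Nat.mul_le_mul_right a hjn
      omega
    have := Finset.card_le_card hsub
    rw [Fin.card_Iic] at this
    simp only at this
    omega
  · intro h
    have hsub : (Finset.univ.filter fun i : Fin b => i.1 * a < v * b) ⊆
        Finset.Iio (⟨n, hn⟩ : Fin b) := by
      intro j hj
      simp only [Finset.mem_filter, Finset.mem_univ, true_and] at hj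
      have h1 : (j : ℕ) * a < n * a := lt_of_lt_of_le hj h
      have h2 : (j : ℕ) < n := Nat.lt_of_mul_lt_mul_right h1
      simpa [Finset.mem_Iio, Fin.lt_def] using h2
    have := Finset.card_le_card hsub
    rw [Fin.card_Iio] at this
    simpa using this

/-- Characterization of parking functions by the counting condition. -/
lemma P_iff {a b : ℕ} (ha : 0 < a) (hb : 0 < b) (c : Fin b → ℕ) :
    SortedLE c (fun i => i.1 * a / b) ↔
      ((∀ i, c i < a) ∧ ∀ v ≤ a, v * b ≤ a * cnt c v) := by
  classical
  have hu : Monotone (fun i : Fin b => i.1 * a / b) := by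
    intro i j hij
    have hij' : (i : ℕ) ≤ j := hij
    exact Nat.div_le_div_right (Nat.mul_le_mul_right a hij')
  rw [sortedLE_iff c _ hu]
  have hcnt : ∀ v, (Finset.univ.filter fun i => c i < v).card = cnt c v := fun _ => rfl
  have hM : ∀ v : ℕ, (Finset.univ.filter fun i : Fin b => i.1 * a / b < v)
      = (Finset.univ.filter fun i : Fin b => i.1 * a < v * b) := by
    intro v
    apply Finset.filter_congr
    intro i _
    simp [Nat.div_lt_iff_lt_mul hb]
  have hMa : (Finset.univ.filter fun i : Fin b => i.1 * a < a * b).card = b := by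
    rw [Finset.filter_true_of_mem, Finset.card_univ, Fintype.card_fin]
    intro i _
    have hib : (i : ℕ) < b := i.2
    calc (i : ℕ) * a < b * a := (Nat.mul_lt_mul_right ha).mpr hib
      _ = a * b := Nat.mul_comm b a
  constructor
  · intro h
    have hall : ∀ i, c i < a := by
      have h' := h a
      rw [hM a, hMa, hcnt a] at h'
      have hca : cnt c a = b := le_antisymm (cnt_le c a) h'
      intro i
      by_contra hia
      have hsub : (Finset.univ.filter fun j => c j < a) ⊆ Finset.univ.erase i := by
        intro j hj
        simp only [Finset.mem_filter, Finset.mem_univ, true_and] at hj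
        refine Finset.mem_erase.mpr ⟨?_, Finset.mem_univ j⟩
        rintro rfl
        omega
      have hle := Finset.card_le_card hsub
      rw [Finset.card_erase_of_mem (Finset.mem_univ i), Finset.card_univ,
        Fintype.card_fin, hcnt a, hca] at hle
      omega
    refine ⟨hall, fun v hv => ?_⟩
    have hMv := h v
    rw [hM v, hcnt v] at hMv
    rcases Nat.lt_or_ge (cnt c v) b with hlt | hge
    · have h1 := (Mcrit (a := a) ha hlt).mp hMv
      calc v * b ≤ cnt c v * a := h1
        _ = a * cnt c v := Nat.mul_comm _ _
    · have h1 : cnt c v = b := le_antisymm (cnt_le c v) hge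
      rw [h1]
      calc v * b ≤ a * b := Nat.mul_le_mul_right b hv
        _ = a * b := rfl
  · rintro ⟨hall, hQ⟩ v
    rw [hM v, hcnt v]
    rcases le_or_gt v a with hva | hva
    · rcases Nat.lt_or_ge (cnt c v) b with hlt | hge
      · apply (Mcrit (a := a) ha hlt).mpr
        calc v * b ≤ a * cnt c v := hQ v hva
          _ = cnt c v * a := Nat.mul_comm _ _
      · have hcv : cnt c v = b := le_antisymm (cnt_le c v) hge
        rw [hcv]
        calc (Finset.univ.filter fun i : Fin b => i.1 * a < v * b).card
            ≤ Finset.univ.card := Finset.card_filter_le _ _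
          _ = b := by simp
    · have hfull : cnt c v = b := by
        rw [← hcnt v, Finset.filter_true_of_mem, Finset.card_univ, Fintype.card_fin]
        intro i _
        exact lt_of_lt_of_le (hall i) (by omega)
      rw [hfull]
      calc (Finset.univ.filter fun i : Fin b => i.1 * a < v * b).card
          ≤ Finset.univ.card := Finset.card_filter_le _ _
        _ = b := by simp

section Shift

variable {a b : ℕ}

lemma cnt_shift₁ {k m v : ℕ} (c : Fin b → ℕ) (hc : ∀ i, c i < a)
    (hm : k + m = a) (hv : v ≤ k) :
    cnt (fun i => (c i + k) % a) v + cnt c m = cnt c (v + m) := by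
  classical
  have hset : (Finset.univ.filter fun i => (c i + k) % a < v)
      = (Finset.univ.filter fun i => c i < v + m) \ (Finset.univ.filter fun i => c i < m) := by
    ext i
    have hca := hc i
    have hmod : (c i + k) % a = if c i < m then c i + k else c i + k - a := by
      split
      · exact Nat.mod_eq_of_lt (by omega)
      · rw [Nat.mod_eq_sub_mod (by omega), Nat.mod_eq_of_lt (by omega)]
    simp only [Finset.mem_filter, Finset.mem_sdiff, Finset.mem_univ, true_and, hmod]
    split <;> omega
  have hsub : (Finset.univ.filter fun i => c i < m)
      ⊆ (Finset.univ.filter fun i => c i < v + m) := by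
    intro i hi
    simp only [Finset.mem_filter, Finset.mem_univ, true_and] at *
    omega
  rw [cnt, hset]
  exact Finset.card_sdiff_add_card_eq_card hsub

lemma cnt_shift₂ {k m w : ℕ} (c : Fin b → ℕ) (hc : ∀ i, c i < a)
    (hm : k + m = a) (hw : w ≤ m) :
    cnt (fun i => (c i + k) % a) (k + w) + cnt c m = cnt c w + b := by
  classical
  have hset : (Finset.univ.filter fun i => (c i + k) % a < k + w)
      = (Finset.univ.filter fun i => c i < w) ∪ (Finset.univ.filter fun i => ¬ c i < m) := by
    ext i
    have hca := hc i
    have hmod : (c i + k) % a = if c i < m then c i + k else c i + k - a := by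
      split
      · exact Nat.mod_eq_of_lt (by omega)
      · rw [Nat.mod_eq_sub_mod (by omega), Nat.mod_eq_of_lt (by omega)]
    simp only [Finset.mem_filter, Finset.mem_union, Finset.mem_univ, true_and, hmod]
    split <;> omega
  have hdisj : Disjoint (Finset.univ.filter fun i => c i < w)
      (Finset.univ.filter fun i => ¬ c i < m) := by
    rw [Finset.disjoint_filter]
    intro i _ h1
    omega
  have hcompl : cnt c m + (Finset.univ.filter fun i => ¬ c i < m).card = b := by
    rw [cnt, Finset.card_filter_add_card_filter_not]
    simp
  rw [cnt, hset, Finset.card_union_of_disjoint hdisj]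
  rw [show (Finset.univ.filter fun i => c i < w).card = cnt c w from rfl]
  omega

/-- After shifting by `k`, the parking condition holds iff `gfun` is minimized at `m = a - k`. -/
lemma window {k m : ℕ} (c : Fin b → ℕ) (hc : ∀ i, c i < a) (hm : k + m = a) :
    (∀ v ≤ a, v * b ≤ a * cnt (fun i => (c i + k) % a) v)
      ↔ (∀ w ≤ a, gfun a b c m ≤ gfun a b c w) := by
  set c' := fun i => (c i + k) % a with hc'
  constructor
  · intro hQ w hw
    rcases le_or_gt m w with hmw | hmw
    · have hv : w - m ≤ k := by omega
      have h1 := cnt_shift₁ c hc hm hv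
      rw [show w - m + m = w by omega, ← hc'] at h1
      have h2 := hQ (w - m) (by omega)
      have h1z : ((cnt c' (w - m) : ℤ)) + cnt c m = cnt c w := by exact_mod_cast h1
      have h1' : (a : ℤ) * cnt c' (w - m) + a * cnt c m = a * cnt c w := by
        linear_combination (a : ℤ) * h1z
      have h2' : ((w : ℤ) - m) * b ≤ (a : ℤ) * cnt c' (w - m) := by
        have : ((w - m : ℕ) : ℤ) * b ≤ (a : ℤ) * cnt c' (w - m) := by exact_mod_cast h2
        have hcast : ((w - m : ℕ) : ℤ) = (w : ℤ) - m := by omega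
        rwa [hcast] at this
      simp only [gfun]
      linarith
    · have h1 := cnt_shift₂ c hc hm (le_of_lt hmw)
      rw [← hc'] at h1
      have h2 := hQ (k + w) (by omega)
      have h1z : ((cnt c' (k + w) : ℤ)) + cnt c m = cnt c w + b := by exact_mod_cast h1
      have h1' : (a : ℤ) * cnt c' (k + w) + a * cnt c m = a * cnt c w + a * b := by
        linear_combination (a : ℤ) * h1z
      have h2' : ((k : ℤ) + w) * b ≤ (a : ℤ) * cnt c' (k + w) := by
        exact_mod_cast h2
      have hab : (a : ℤ) * b = (k : ℤ) * b + m * b := by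
        have hkm : ((k : ℤ) + m) = a := by exact_mod_cast hm
        rw [← hkm]
        ring
      simp only [gfun]
      linarith
  · intro hg v hv
    rcases le_or_gt v k with hvk | hvk
    · have h1 := cnt_shift₁ c hc hm hvk
      rw [← hc'] at h1
      have hgw := hg (v + m) (by omega)
      have h1z : ((cnt c' v : ℤ)) + cnt c m = cnt c (v + m) := by exact_mod_cast h1
      have h1' : (a : ℤ) * cnt c' v + a * cnt c m = a * cnt c (v + m) := by
        linear_combination (a : ℤ) * h1z
      simp only [gfun] at hgw
      have hcast : ((v + m : ℕ) : ℤ) = (v : ℤ) + m := by push_cast; ring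
      rw [hcast] at hgw
      have goal' : ((v : ℤ)) * b ≤ (a : ℤ) * cnt c' v := by linarith
      exact_mod_cast goal'
    · have hw : v - k ≤ m := by omega
      have h1 := cnt_shift₂ c hc hm hw
      rw [show k + (v - k) = v by omega, ← hc'] at h1
      have hgw := hg (v - k) (by omega)
      have h1z : ((cnt c' v : ℤ)) + cnt c m = cnt c (v - k) + b := by exact_mod_cast h1
      have h1' : (a : ℤ) * cnt c' v + a * cnt c m = a * cnt c (v - k) + a * b := by
        linear_combination (a : ℤ) * h1z
      simp only [gfun] at hgw
      have hcast : ((v - k : ℕ) : ℤ) = (v : ℤ) - k := by omega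
      rw [hcast] at hgw
      have hab : (a : ℤ) * b = (k : ℤ) * b + m * b := by
        have hkm : ((k : ℤ) + m) = a := by exact_mod_cast hm
        rw [← hkm]
        ring
      have goal' : ((v : ℤ)) * b ≤ (a : ℤ) * cnt c' v := by linarith
      exact_mod_cast goal'

end Shift

lemma g_zero {a b : ℕ} (c : Fin b → ℕ) : gfun a b c 0 = 0 := by
  simp [gfun, cnt_zero]

lemma g_top {a b : ℕ} (c : Fin b → ℕ) (hc : ∀ i, c i < a) : gfun a b c a = 0 := by
  simp only [gfun, cnt_top c hc]
  ring

lemma g_inj {a b : ℕ} (hab : Nat.Coprime a b) (c : Fin b → ℕ)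
    {v w : ℕ} (hv : v < a) (hw : w < a) (h : gfun a b c v = gfun a b c w) : v = w := by
  have hdv : (a : ℤ) ∣ gfun a b c v + v * b := ⟨cnt c v, by simp only [gfun]; ring⟩
  have hdw : (a : ℤ) ∣ gfun a b c w + w * b := ⟨cnt c w, by simp only [gfun]; ring⟩
  have hdiff : (a : ℤ) ∣ ((v : ℤ) - w) * b := by
    have := dvd_sub hdv hdw
    rw [h] at this
    have heq : gfun a b c w + v * b - (gfun a b c w + w * b) = ((v : ℤ) - w) * b := by ring
    rwa [heq] at this
  have hco : IsCoprime (a : ℤ) (b : ℤ) := Nat.isCoprime_iff_coprime.mpr hab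
  have hdvw : (a : ℤ) ∣ (v : ℤ) - w := hco.dvd_of_dvd_mul_right hdiff
  have : ((v : ℤ) - w) = 0 := by
    apply Int.eq_zero_of_abs_lt_dvd hdvw
    rw [abs_sub_lt_iff]
    constructor <;> omega
  omega

/-- Pollak's argument: there is exactly one shift `k < a` making `c` a parking function. -/
lemma pollak_nat {a b : ℕ} (ha : 0 < a) (hab : Nat.Coprime a b)
    (c : Fin b → ℕ) (hc : ∀ i, c i < a) :
    ∃! k, k < a ∧ ∀ v ≤ a, v * b ≤ a * cnt (fun i => (c i + k) % a) v := by
  classical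
  obtain ⟨m0, hm0mem, hm0min⟩ :=
    Finset.exists_min_image (Finset.range a) (gfun a b c) ⟨0, Finset.mem_range.mpr ha⟩
  have hm0a : m0 < a := Finset.mem_range.mp hm0mem
  have hmin : ∀ w ≤ a, gfun a b c m0 ≤ gfun a b c w := by
    intro w hw
    rcases Nat.lt_or_ge w a with hlt | hge
    · exact hm0min w (Finset.mem_range.mpr hlt)
    · have : w = a := by omega
      rw [this, g_top c hc, ← g_zero (a := a) (b := b) c]
      exact hm0min 0 (Finset.mem_range.mpr ha)
  refine ⟨if m0 = 0 then 0 else a - m0, ⟨?_, ?_⟩, ?_⟩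
  · split <;> omega
  · -- show Q for this k
    set k := if m0 = 0 then 0 else a - m0 with hk
    have hkm : k + (a - k) = a := by
      rw [hk]; split <;> omega
    apply (window c hc hkm).mpr
    intro w hw
    have hak : a - k = if m0 = 0 then a else m0 := by
      rw [hk]; split <;> omega
    rw [hak]
    split
    · rename_i h0
      rw [g_top c hc, ← g_zero (a := a) (b := b) c, ← h0]
      exact hmin w hw
    · exact hmin w hw
  · -- uniqueness
    intro k ⟨hka, hQ⟩
    have hkm : k + (a - k) = a := by omega
    have hgmin := (window c hc hkm).mp hQ
    -- a - k ∈ [1, a]; reduce to a value < a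
    set m := if a - k = a then 0 else a - k with hmdef
    have hma : m < a := by rw [hmdef]; split <;> omega
    have hgm : gfun a b c m = gfun a b c (a - k) := by
      rw [hmdef]; split
      · rename_i h; rw [h, g_top c hc, g_zero]
      · rfl
    have hmmin : ∀ w ≤ a, gfun a b c m ≤ gfun a b c w := by
      intro w hw; rw [hgm]; exact hgmin w hw
    have : m = m0 := by
      apply g_inj hab c hma hm0a
      exact le_antisymm (hmmin m0 (by omega)) (hmin m (by omega))
    rw [hmdef] at this
    split at this <;> split <;> omega

lemma mod_shift_inv {a x k : ℕ} (hx : x < a) (hk : k ≤ a) :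
    ((x + k) % a + (a - k) % a) % a = x := by
  have ha : 0 < a := by omega
  conv_lhs => rw [← Nat.add_mod]
  rw [show x + k + (a - k) = x + a by omega, Nat.add_mod_right, Nat.mod_eq_of_lt hx]

lemma sub_mod_inj {a k₁ k₂ : ℕ} (h1 : k₁ < a) (h2 : k₂ < a)
    (h : (a - k₁) % a = (a - k₂) % a) : k₁ = k₂ := by
  have e : ∀ k : ℕ, k < a → (a - k) % a = if k = 0 then 0 else a - k := by
    intro k hk
    split
    · rename_i h0; rw [h0, Nat.sub_zero, Nat.mod_self]
    · exact Nat.mod_eq_of_lt (by omega)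
  rw [e k₁ h1, e k₂ h2] at h
  split at h <;> split at h <;> omega

end RationalParking

open RationalParking in
/-- The number of `(a,b)`-parking functions of length `b` (for `a, b` coprime):
sequences of `b` nonnegative integers whose `i`-th order statistic is at most
`⌊(i-1)·a/b⌋`, equals `a^(b-1)`. -/
theorem count_rational_parking (a b : ℕ) (ha : 0 < a) (hb : 0 < b)
    (hab : Nat.Coprime a b) :
    Nat.card {c : Fin b → ℕ // SortedLE c (fun i => i.1 * a / b)} = a ^ (b - 1) := by
  classical
  set S := {c : Fin b → ℕ // SortedLE c (fun i => i.1 * a / b)} with hS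
  let E : Fin a × S → (Fin b → Fin a) := fun p i =>
    ⟨(p.2.1 i + p.1.1) % a, Nat.mod_lt _ ha⟩
  have hbij : Function.Bijective E := by
    constructor
    · rintro ⟨k₁, c₁⟩ ⟨k₂, c₂⟩ h
      have hP₁ := (P_iff ha hb c₁.1).mp c₁.2
      have hP₂ := (P_iff ha hb c₂.1).mp c₂.2
      set d : Fin b → ℕ := fun i => (c₁.1 i + k₁.1) % a with hd
      have hdlt : ∀ i, d i < a := fun i => Nat.mod_lt _ ha
      have hd₂ : ∀ i, d i = (c₂.1 i + k₂.1) % a := by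
        intro i
        have h1 := congrFun h i
        exact congrArg Fin.val h1
      set s₁ := (a - k₁.1) % a with hs₁
      set s₂ := (a - k₂.1) % a with hs₂
      have hs₁a : s₁ < a := Nat.mod_lt _ ha
      have hs₂a : s₂ < a := Nat.mod_lt _ ha
      have hrec₁ : (fun i => (d i + s₁) % a) = c₁.1 := by
        funext i
        exact mod_shift_inv (hP₁.1 i) (le_of_lt k₁.2)
      have hrec₂ : (fun i => (d i + s₂) % a) = c₂.1 := by
        funext i
        rw [hd₂ i]
        exact mod_shift_inv (hP₂.1 i) (le_of_lt k₂.2)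
      obtain ⟨k0, _, huniq⟩ := pollak_nat ha hab d hdlt
      have he₁ : s₁ = k0 := huniq s₁ ⟨hs₁a, by rw [hrec₁]; exact hP₁.2⟩
      have he₂ : s₂ = k0 := huniq s₂ ⟨hs₂a, by rw [hrec₂]; exact hP₂.2⟩
      have hk : k₁ = k₂ := by
        apply Fin.ext
        exact sub_mod_inj k₁.2 k₂.2 (by rw [← hs₁, ← hs₂, he₁, he₂])
      have hc : c₁ = c₂ := by
        apply Subtype.ext
        rw [← hrec₁, ← hrec₂, he₁, he₂]
      rw [hk, hc]
    · intro f
      set c₀ : Fin b → ℕ := fun i => (f i).1 with hc₀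
      have hc₀a : ∀ i, c₀ i < a := fun i => (f i).2
      obtain ⟨k, ⟨hka, hQ⟩, -⟩ := pollak_nat ha hab c₀ hc₀a
      set c' : Fin b → ℕ := fun i => (c₀ i + k) % a with hc'
      have hc'a : ∀ i, c' i < a := fun i => Nat.mod_lt _ ha
      have hP' : SortedLE c' (fun i => i.1 * a / b) := (P_iff ha hb c').mpr ⟨hc'a, hQ⟩
      refine ⟨⟨⟨(a - k) % a, Nat.mod_lt _ ha⟩, ⟨c', hP'⟩⟩, ?_⟩
      funext i
      apply Fin.ext
      show (c' i + (a - k) % a) % a = c₀ i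
      exact mod_shift_inv (hc₀a i) (le_of_lt hka)
  have hcard := Nat.card_congr (Equiv.ofBijective E hbij)
  rw [Nat.card_prod] at hcard
  have h1 : Nat.card (Fin a) = a := by simp
  have h2 : Nat.card (Fin b → Fin a) = a ^ b := by
    rw [Nat.card_eq_fintype_card, Fintype.card_fun]
    simp
  rw [h1, h2] at hcard
  have h3 : a ^ b = a * a ^ (b - 1) := by
    conv_lhs => rw [show b = (b - 1) + 1 by omega]
    rw [pow_succ]
    ring
  rw [h3] at hcard
  exact Nat.eq_of_mul_eq_mul_left ha hcard
end

section
/- The Pitman–Stanley polynomial P_n(x) = Σ_{a ∈ park(n)} x_{a_1}···x_{a_n} equals the number of x-parking functions of length n when x = (x_1,...,x_n) ∈ ℕ^n with all x_i positive: that is, the number of sequences (c_1,...,c_n) of positive integers whose nondecreasing rearrangement satisfies c_{(i)} ≤ x_1+...+x_i equals Σ_{a ∈ park(n)} x_{a_1}···x_{a_n}. -/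
open Finset
open scoped Classical

/-- Classical parking functions of length `n`, 0-indexed: functions `c : Fin n → Fin n`
whose nondecreasing rearrangement satisfies `c_(i) ≤ i`. -/
noncomputable def park (n : ℕ) : Finset (Fin n → Fin n) :=
  Finset.univ.filter (fun c => ∃ σ : Equiv.Perm (Fin n),
    (∀ i j : Fin n, i ≤ j → c (σ i) ≤ c (σ j)) ∧ ∀ i, (c (σ i) : ℕ) ≤ (i : ℕ))

/-!
Cut `{1, …, x₁ + ⋯ + xₙ}` into consecutive blocks of sizes `x₁, …, xₙ` and send a value to the
index of its block. This map is monotone and satisfies `block v ≤ k ↔ v ≤ x₁ + ⋯ + x_{k+1}`, so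
it turns the order-statistic bounds of an `x`-parking function `c` into those of a classical
parking function `a`. Conversely every `c` whose entries lie in the blocks prescribed by some
`a ∈ park n` is an `x`-parking function, and these `c` form a box with `∏ᵢ x_{aᵢ}` points.
-/

section SortedLE

variable {n : ℕ}

theorem sortedLE_iff_of_monotone {c u : Fin n → ℕ} {σ : Equiv.Perm (Fin n)}
    (hσ : Monotone (c ∘ σ)) : SortedLE c u ↔ ∀ i, c (σ i) ≤ u i := by
  refine ⟨fun ⟨τ, hτ, hle⟩ => ?_, fun hle => ⟨σ, fun _ _ h => hσ h, hle⟩⟩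
  have hsort : c ∘ σ = c ∘ τ := Tuple.unique_monotone hσ fun _ _ h => hτ _ _ h
  exact fun i => (congrFun hsort i).trans_le (hle i)

theorem sortedLE_comp_iff {f : ℕ → ℕ} (hf : Monotone f) {c u v : Fin n → ℕ}
    (h : ∀ i k, f (c i) ≤ v k ↔ c i ≤ u k) : SortedLE (f ∘ c) v ↔ SortedLE c u := by
  have hc : Monotone (c ∘ Tuple.sort c) := Tuple.monotone_sort c
  rw [sortedLE_iff_of_monotone hc, sortedLE_iff_of_monotone (hf.comp hc)]
  exact forall_congr' fun i => h _ i

theorem mem_park_iff_sortedLE {a : Fin n → Fin n} :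
    a ∈ park n ↔ SortedLE (fun i => (a i : ℕ)) (fun i => (i : ℕ)) := by
  simp only [park, mem_filter, mem_univ, true_and, SortedLE, Fin.le_def]

end SortedLE

namespace PitmanStanley

variable {n : ℕ} (x : Fin n → ℕ)

def prefixSum (k : Fin n) : ℕ := ∑ j ∈ Iic k, x j

def blockStart (k : Fin n) : ℕ := ∑ j ∈ Iio k, x j

/-- The index `k` of the block `Ioc (blockStart x k) (prefixSum x k)` containing `v > 0`;
it is `n` for `v` past the last block. -/
def blockIndex (v : ℕ) : ℕ := #{j | prefixSum x j < v}

def blockBox (a : Fin n → Fin n) : Finset (Fin n → ℕ) :=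
  Fintype.piFinset fun i => Ioc (blockStart x (a i)) (prefixSum x (a i))

variable {x}

theorem prefixSum_eq_blockStart_add (k : Fin n) : prefixSum x k = blockStart x k + x k := by
  rw [prefixSum, blockStart, Iic_eq_cons_Iio, sum_cons, add_comm]

theorem prefixSum_mono : Monotone (prefixSum x) := fun _ _ h =>
  sum_le_sum_of_subset (Iic_subset_Iic.2 h)

theorem prefixSum_eq_blockStart_of_succ {j k : Fin n} (h : (j : ℕ) + 1 = k) :
    prefixSum x j = blockStart x k := by
  unfold prefixSum blockStart
  congr 1
  ext i
  simp only [mem_Iic, mem_Iio, Fin.le_def, Fin.lt_def]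
  omega

theorem blockStart_eq_zero {k : Fin n} (h : (k : ℕ) = 0) : blockStart x k = 0 :=
  sum_eq_zero fun i hi => by rw [mem_Iio, Fin.lt_def] at hi; omega

theorem blockIndex_le_iff {v : ℕ} {k : Fin n} : blockIndex x v ≤ k ↔ v ≤ prefixSum x k := by
  constructor
  · intro h
    by_contra! hk
    have hsub : Iic k ⊆ ({j | prefixSum x j < v} : Finset (Fin n)) := fun j hj =>
      mem_filter.2 ⟨mem_univ j, (prefixSum_mono (mem_Iic.1 hj)).trans_lt hk⟩
    have := card_le_card hsub
    rw [Fin.card_Iic] at this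
    exact absurd h (by unfold blockIndex; omega)
  · intro hk
    have hsub : ({j | prefixSum x j < v} : Finset (Fin n)) ⊆ Iio k := fun j hj => by
      rw [mem_Iio]
      by_contra! hkj
      exact (hk.trans (prefixSum_mono hkj)).not_gt (mem_filter.1 hj).2
    exact (card_le_card hsub).trans (Fin.card_Iio k).le

theorem blockIndex_mono : Monotone (blockIndex x) := fun _ _ h =>
  card_le_card fun _ => by simp only [mem_filter]; exact And.imp_right (·.trans_le h)

theorem blockIndex_eq_iff {v : ℕ} (hv : 0 < v) {k : Fin n} :
    blockIndex x v = k ↔ v ∈ Ioc (blockStart x k) (prefixSum x k) := by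
  rw [mem_Ioc, ← blockIndex_le_iff]
  rcases Nat.eq_zero_or_eq_succ_pred (k : ℕ) with hk | hk
  · rw [blockStart_eq_zero hk, hk]
    omega
  · let j : Fin n := ⟨k - 1, by omega⟩
    have hjk : (j : ℕ) + 1 = k := by simp only [j]; omega
    rw [← prefixSum_eq_blockStart_of_succ hjk, ← not_le, ← blockIndex_le_iff]
    omega

theorem sortedLE_prefixSum_iff_mem_park {c : Fin n → ℕ} {a : Fin n → Fin n}
    (h : ∀ i, blockIndex x (c i) = a i) : SortedLE c (prefixSum x) ↔ a ∈ park n := by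
  rw [mem_park_iff_sortedLE, ← sortedLE_comp_iff blockIndex_mono fun _ _ => blockIndex_le_iff]
  exact Iff.of_eq (congrArg₂ _ (funext h) rfl)

theorem pos_of_mem_blockBox {a : Fin n → Fin n} {c : Fin n → ℕ} (hc : c ∈ blockBox x a)
    (i : Fin n) : 0 < c i :=
  (Nat.zero_le _).trans_lt (mem_Ioc.1 (Fintype.mem_piFinset.1 hc i)).1

theorem blockIndex_of_mem_blockBox {a : Fin n → Fin n} {c : Fin n → ℕ} (hc : c ∈ blockBox x a)
    (i : Fin n) : blockIndex x (c i) = a i :=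
  (blockIndex_eq_iff (pos_of_mem_blockBox hc i)).2 (Fintype.mem_piFinset.1 hc i)

theorem pairwiseDisjoint_blockBox (s : Set (Fin n → Fin n)) : s.PairwiseDisjoint (blockBox x) :=
  fun _ _ _ _ hab => disjoint_left.2 fun _ hca hcb => hab <| funext fun i => Fin.ext <|
    (blockIndex_of_mem_blockBox hca i).symm.trans (blockIndex_of_mem_blockBox hcb i)

theorem card_blockBox (a : Fin n → Fin n) : #(blockBox x a) = ∏ i, x (a i) := by
  simp only [blockBox, Fintype.card_piFinset, Nat.card_Ioc, prefixSum_eq_blockStart_add,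
    Nat.add_sub_cancel_left]

theorem xParking_iff_exists_mem_blockBox {c : Fin n → ℕ} :
    ((∀ i, 1 ≤ c i) ∧ SortedLE c (prefixSum x)) ↔ ∃ a ∈ park n, c ∈ blockBox x a := by
  constructor
  · rintro ⟨hpos, hsorted⟩
    have hlt : ∀ i, blockIndex x (c i) < n := fun i => by
      obtain ⟨σ, -, hle⟩ := hsorted
      exact (blockIndex_le_iff.2 (by simpa using hle (σ.symm i))).trans_lt (σ.symm i).isLt
    refine ⟨fun i => ⟨_, hlt i⟩, (sortedLE_prefixSum_iff_mem_park fun _ => rfl).1 hsorted,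
      Fintype.mem_piFinset.2 fun i => (blockIndex_eq_iff (hpos i)).1 rfl⟩
  · rintro ⟨a, ha, hc⟩
    exact ⟨pos_of_mem_blockBox hc,
      (sortedLE_prefixSum_iff_mem_park (blockIndex_of_mem_blockBox hc)).2 ha⟩

end PitmanStanley

open PitmanStanley

theorem pitman_stanley_counts_x_parking_general (n : ℕ)
    (x : Fin n → ℕ) :
    Nat.card {c : Fin n → ℕ //
        (∀ i, 1 ≤ c i) ∧
          SortedLE c (fun i => ∑ j ∈ Finset.univ.filter (· ≤ i), x j)} =
      ∑ a ∈ park n, ∏ i, x (a i) := by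
  simp only [filter_ge_eq_Iic]
  calc Nat.card {c : Fin n → ℕ // (∀ i, 1 ≤ c i) ∧ SortedLE c (prefixSum x)}
      = #((park n).biUnion (blockBox x)) := by
        simp only [xParking_iff_exists_mem_blockBox, ← mem_biUnion]
        exact Nat.card_eq_finsetCard _
    _ = ∑ a ∈ park n, ∏ i, x (a i) := by
        rw [card_biUnion (pairwiseDisjoint_blockBox _)]
        exact sum_congr rfl fun a _ => card_blockBox a

/-- The Pitman–Stanley polynomial evaluated at a positive integer vector `x` counts
the `x`-parking functions: positive integer sequences whose `i`-th order statistic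
is at most `x_1 + ⋯ + x_i`. -/
theorem pitman_stanley_counts_x_parking (n : ℕ) (hn : 0 < n)
    (x : Fin n → ℕ) (hx : ∀ i, 1 ≤ x i) :
    Nat.card {c : Fin n → ℕ //
        (∀ i, 1 ≤ c i) ∧
          SortedLE c (fun i => ∑ j ∈ Finset.univ.filter (· ≤ i), x j)} =
      ∑ a ∈ park n, ∏ i, x (a i) :=
  pitman_stanley_counts_x_parking_general n x
end

section
/- Let G be the context-free grammar with rules A → A³S and S → AS², and D the associated formal derivative on the polynomial ring ℚ[A,S] (the derivation with D(A) = A³S, D(S) = AS²). Then for all n ≥ 1, evaluating D^n(S) at A = S = 1 gives (n+1)^{n-1}. -/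
open MvPolynomial Finset

/-- The formal derivative of the grammar `G : A → A³S, S → AS²`, as the derivation
on `ℚ[A,S]` (variable `0` is `A`, variable `1` is `S`). -/
noncomputable def Dgram : Derivation ℚ (MvPolynomial (Fin 2) ℚ) (MvPolynomial (Fin 2) ℚ) :=
  MvPolynomial.mkDerivation ℚ ![X 0 ^ 3 * X 1, X 0 * X 1 ^ 2]

lemma Dgram_X0 : Dgram (X 0) = X 0 ^ 3 * X 1 := by simp [Dgram, mkDerivation_X]
lemma Dgram_X1 : Dgram (X 1) = X 0 * X 1 ^ 2 := by simp [Dgram, mkDerivation_X]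

/-- rising product `rr m a = ∏_{i<m} (a-1+i)` -/
def rr : ℕ → ℚ → ℚ
  | 0, _ => 1
  | (m+1), a => rr m a * (a - 1 + m)

/-- `uu n a s` models eval at 1 of `Dⁿ(AᵃSˢ)`. -/
def uu : ℕ → ℚ → ℚ → ℚ
  | 0, _, _ => 1
  | (n+1), a, s => a * uu n (a+2) (s+1) + s * uu n (a+1) (s+1)

/-- closed form -/
def vv (n : ℕ) (a s : ℚ) : ℚ :=
  ∑ m ∈ Finset.range (n+1), (n.choose m : ℚ) * rr m a * (s + n) ^ (n - m)

lemma rr_zero (a : ℚ) : rr 0 a = 1 := rfl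

lemma rr_succ_left (m : ℕ) (a : ℚ) : rr (m+1) a = (a - 1) * rr m (a+1) := by
  induction m generalizing a with
  | zero => simp [rr]
  | succ m ih =>
    show rr (m+1) a * (a - 1 + (m+1 : ℕ)) = (a-1) * (rr m (a+1) * ((a+1) - 1 + m))
    rw [ih]; push_cast; ring

lemma rr_mul_left (m : ℕ) (a : ℚ) : a * rr m (a+2) = rr (m+1) (a+1) := by
  rw [rr_succ_left]; ring_nf

lemma rr_succ_right (m : ℕ) (a : ℚ) : rr (m+1) (a+1) = rr m (a+1) * (a + m) := by
  show rr m (a+1) * ((a+1) - 1 + m) = rr m (a+1) * (a + m); ring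

lemma rr_one_zero : rr 1 (0 : ℚ) = -1 := by norm_num [rr]

lemma rr_two_zero (m : ℕ) : rr (m+2) (0 : ℚ) = 0 := by
  induction m with
  | zero =>
    show rr 1 0 * ((0:ℚ) - 1 + ((1:ℕ):ℚ)) = 0
    norm_num
  | succ m ih =>
    show rr (m+2) 0 * ((0:ℚ) - 1 + ((m+2:ℕ):ℚ)) = 0
    rw [ih, zero_mul]

/-- the key coefficient identity -/
lemma coeff_id (n m : ℕ) (hm : m ≤ n) (a : ℚ) :
    ((n+1).choose (m+1) : ℚ) * rr (m+1) a =
      (n.choose m : ℚ) * rr (m+1) (a+1) + (n.choose (m+1) : ℚ) * rr (m+1) (a+1)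
        - ((n:ℚ)+1) * ((n.choose m : ℚ) * rr m (a+1)) := by
  have hq : (n.choose (m+1) : ℚ) * ((m:ℚ)+1) = (n.choose m : ℚ) * ((n:ℚ) - m) := by
    have h1 := Nat.choose_succ_right_eq n m
    have h2 : ((n - m : ℕ) : ℚ) = (n : ℚ) - m := Nat.cast_sub hm
    calc (n.choose (m+1) : ℚ) * ((m:ℚ)+1) = ((n.choose (m+1) * (m+1) : ℕ) : ℚ) := by
          push_cast; ring
      _ = ((n.choose m * (n - m) : ℕ) : ℚ) := by rw [h1]
      _ = (n.choose m : ℚ) * ((n:ℚ) - m) := by push_cast [h2]; ring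
  have pascal : ((n+1).choose (m+1) : ℚ) = (n.choose m : ℚ) + (n.choose (m+1) : ℚ) := by
    exact_mod_cast congrArg (Nat.cast (R := ℚ)) (Nat.choose_succ_succ n m)
  rw [rr_succ_left, rr_succ_right, pascal]
  linear_combination (-(rr m (a+1))) * hq

lemma uu_eq_vv (n : ℕ) (a s : ℚ) : uu n a s = vv n a s := by
  induction n generalizing a s with
  | zero => simp [uu, vv, rr_zero]
  | succ n ih =>
    set y : ℚ := s + ((n+1 : ℕ) : ℚ) with hydef
    have hsyn : (s + 1) + (n : ℚ) = y := by rw [hydef]; push_cast; ring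
    have hsy : s = y - ((n:ℚ)+1) := by rw [hydef]; push_cast; ring
    have h1 : a * vv n (a+2) (s+1)
        = ∑ m ∈ range (n+1), (n.choose m : ℚ) * rr (m+1) (a+1) * y ^ (n - m) := by
      rw [vv, mul_sum]
      refine sum_congr rfl fun m _ => ?_
      rw [hsyn, ← rr_mul_left]; ring
    have h3 : (∑ m ∈ range (n+1), (n.choose m : ℚ) * rr m (a+1) * y ^ ((n - m)+1))
        = y^(n+1) + ∑ m ∈ range (n+1), (n.choose (m+1) : ℚ) * rr (m+1) (a+1) * y ^ (n - m) := by
      rw [Finset.sum_range_succ' (fun m => (n.choose m : ℚ) * rr m (a+1) * y ^ ((n - m)+1)) n]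
      rw [Finset.sum_range_succ (fun m => (n.choose (m+1) : ℚ) * rr (m+1) (a+1) * y ^ (n - m)) n]
      have e0 : (n.choose 0 : ℚ) * rr 0 (a+1) * y ^ ((n - 0)+1) = y^(n+1) := by
        simp [rr_zero]
      have en : (n.choose (n+1) : ℚ) * rr (n+1) (a+1) * y ^ (n - n) = 0 := by
        simp [Nat.choose_succ_self]
      rw [e0, en, add_zero]
      have hc : ∀ m ∈ range n,
          (n.choose (m+1) : ℚ) * rr (m+1) (a+1) * y ^ ((n - (m+1))+1)
          = (n.choose (m+1) : ℚ) * rr (m+1) (a+1) * y ^ (n - m) := by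
        intro m hm
        have := mem_range.mp hm
        rw [show (n - (m+1)) + 1 = n - m by omega]
      rw [sum_congr rfl hc]
      ring
    have h2 : s * vv n (a+1) (s+1)
        = y^(n+1) + ∑ m ∈ range (n+1), (n.choose (m+1) : ℚ) * rr (m+1) (a+1) * y ^ (n - m)
          - ∑ m ∈ range (n+1), ((n:ℚ)+1) * ((n.choose m : ℚ) * rr m (a+1)) * y ^ (n - m) := by
      rw [← h3, vv, mul_sum, ← sum_sub_distrib]
      refine sum_congr rfl fun m _ => ?_
      rw [hsyn, pow_succ]
      rw [hsy]; ring
    have h4 : vv (n+1) a s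
        = y^(n+1) + ∑ m ∈ range (n+1), ((n+1).choose (m+1) : ℚ) * rr (m+1) a * y ^ (n - m) := by
      rw [vv, Finset.sum_range_succ'
        (fun m => ((n+1).choose m : ℚ) * rr m a * (s + ((n+1:ℕ):ℚ)) ^ ((n+1) - m)) (n+1)]
      have e0 : (((n+1).choose 0 : ℚ)) * rr 0 a * (s + ((n+1:ℕ):ℚ)) ^ ((n+1) - 0) = y^(n+1) := by
        simp [rr_zero, hydef]
      rw [e0]
      have hc : ∀ m ∈ range (n+1),
          (((n+1).choose (m+1) : ℚ)) * rr (m+1) a * (s + ((n+1:ℕ):ℚ)) ^ ((n+1) - (m+1))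
          = ((n+1).choose (m+1) : ℚ) * rr (m+1) a * y ^ (n - m) := by
        intro m hm
        rw [show (n+1) - (m+1) = n - m by omega, ← hydef]
      rw [sum_congr rfl hc]
      ring
    have main : ∑ m ∈ range (n+1), ((n+1).choose (m+1) : ℚ) * rr (m+1) a * y ^ (n - m)
        = ∑ m ∈ range (n+1), (n.choose m : ℚ) * rr (m+1) (a+1) * y ^ (n - m)
          + ∑ m ∈ range (n+1), (n.choose (m+1) : ℚ) * rr (m+1) (a+1) * y ^ (n - m)
          - ∑ m ∈ range (n+1), ((n:ℚ)+1) * ((n.choose m : ℚ) * rr m (a+1)) * y ^ (n - m) := by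
      rw [← sum_add_distrib, ← sum_sub_distrib]
      refine sum_congr rfl fun m hm => ?_
      have hmn : m ≤ n := Nat.lt_succ_iff.mp (mem_range.mp hm)
      linear_combination y ^ (n - m) * coeff_id n m hmn a
    show a * uu n (a+2) (s+1) + s * uu n (a+1) (s+1) = vv (n+1) a s
    rw [ih, ih, h1, h2, h4, main]
    ring

lemma Dmono (a b : ℕ) :
    Dgram (X 0 ^ a * X 1 ^ b) =
      (a : ℚ) • (X 0 ^ (a+2) * X 1 ^ (b+1)) + (b : ℚ) • (X 0 ^ (a+1) * X 1 ^ (b+1)) := by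
  have h : Dgram (X 0 ^ a * X 1 ^ b)
      = X (0 : Fin 2) ^ a • Dgram (X 1 ^ b) + X (1 : Fin 2) ^ b • Dgram (X 0 ^ a) :=
    Derivation.leibniz _ _ _
  rw [h, Derivation.leibniz_pow, Derivation.leibniz_pow, Dgram_X0, Dgram_X1]
  cases a with
  | zero =>
    cases b with
    | zero => simp
    | succ b =>
      simp only [Nat.cast_zero, zero_smul, zero_nsmul, smul_zero, add_zero, zero_add,
        Nat.succ_sub_one, smul_eq_mul, nsmul_eq_mul, smul_eq_C_mul]
      push_cast [← C_eq_coe_nat]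
      simp only [map_add, map_one]
      ring
  | succ a =>
    cases b with
    | zero =>
      simp only [Nat.cast_zero, zero_smul, zero_nsmul, smul_zero, add_zero, zero_add,
        Nat.succ_sub_one, smul_eq_mul, nsmul_eq_mul, smul_eq_C_mul]
      push_cast [← C_eq_coe_nat]
      simp only [map_add, map_one]
      ring
    | succ b =>
      simp only [Nat.succ_sub_one, smul_eq_mul, nsmul_eq_mul, smul_eq_C_mul]
      push_cast [← C_eq_coe_nat]
      simp only [map_add, map_one]
      ring

lemma iter_add (n : ℕ) (p q : MvPolynomial (Fin 2) ℚ) :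
    (fun p => Dgram p)^[n] (p + q) = (fun p => Dgram p)^[n] p + (fun p => Dgram p)^[n] q := by
  induction n generalizing p q with
  | zero => simp
  | succ n ih => simp [Function.iterate_succ_apply, map_add, ih]

lemma iter_smul (n : ℕ) (c : ℚ) (p : MvPolynomial (Fin 2) ℚ) :
    (fun p => Dgram p)^[n] (c • p) = c • (fun p => Dgram p)^[n] p := by
  induction n generalizing p with
  | zero => simp
  | succ n ih => simp [Function.iterate_succ_apply, Derivation.map_smul, ih]

lemma eval_iter_mono (n a b : ℕ) :
    MvPolynomial.eval (fun _ => (1 : ℚ)) ((fun p => Dgram p)^[n] (X 0 ^ a * X 1 ^ b))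
      = uu n a b := by
  induction n generalizing a b with
  | zero => simp [uu]
  | succ n ih =>
    rw [Function.iterate_succ_apply, Dmono, iter_add, iter_smul, iter_smul, map_add,
      smul_eq_C_mul, smul_eq_C_mul, map_mul, map_mul, eval_C, eval_C, ih, ih]
    show _ = (a:ℚ) * uu n ((a:ℚ)+2) ((b:ℚ)+1) + (b:ℚ) * uu n ((a:ℚ)+1) ((b:ℚ)+1)
    push_cast
    ring

theorem grammar_counts_parking (n : ℕ) (hn : 1 ≤ n) :
    MvPolynomial.eval (fun _ => (1 : ℚ)) ((fun p => Dgram p)^[n] (X 1)) =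
      (n + 1) ^ (n - 1) := by
  obtain ⟨k, rfl⟩ : ∃ k, n = k + 1 := ⟨n - 1, by omega⟩
  have hX : (X 1 : MvPolynomial (Fin 2) ℚ) = X 0 ^ 0 * X 1 ^ 1 := by ring
  rw [hX, eval_iter_mono, uu_eq_vv, vv]
  push_cast
  rw [Finset.sum_range_succ'
    (fun m => (((k+1).choose m : ℚ)) * rr m 0 * ((1:ℚ) + ((k:ℚ)+1)) ^ ((k+1) - m)) (k+1)]
  rw [Finset.sum_range_succ'
    (fun m => (((k+1).choose (m+1) : ℚ)) * rr (m+1) 0 * ((1:ℚ) + ((k:ℚ)+1)) ^ ((k+1) - (m+1))) k]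
  have hz : ∀ m ∈ range k,
      (((k+1).choose (m+2) : ℚ)) * rr (m+2) 0 * ((1:ℚ) + ((k:ℚ)+1)) ^ ((k+1) - (m+2)) = 0 := by
    intro m _
    rw [rr_two_zero, mul_zero, zero_mul]
  rw [Finset.sum_congr rfl hz, Finset.sum_const_zero, zero_add]
  rw [rr_one_zero, rr_zero, Nat.choose_one_right, Nat.choose_zero_right]
  push_cast
  rw [show ((1:ℚ) + ((k:ℚ)+1)) ^ (k+1) = ((1:ℚ) + ((k:ℚ)+1)) ^ k * ((1:ℚ)+((k:ℚ)+1)) from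
    pow_succ _ _]
  ring
end
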